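/- arXiv:2604.17432 — 3 statements merged into one kernel-verified Lean document; each statement's English description precedes it below -/
import Mathlib

section
/- For every nonnegative locally integrable vector function f⃗ = (f₁,…,f_m) on ℝⁿ and every x ∈ ℝⁿ, the m-linear fractional integral operator satisfies the pointwise dyadic discretization I_α(f⃗)(x) ≲ ∑_{Q ∈ D} ℓ_Q^α ∏_{j=1}^m ( |Q|^{-1} ∫_{3Q} f_j(y) dy ) 1_Q(x), with implicit constant depending only on n, m, α. -/
open MeasureTheory ENNReal

noncomputable section

variable {n : ℕ}

/-- Axis-parallel cube with lower corner `a` and side length `r` (half-open). -/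
def cube (a : Fin n → ℝ) (r : ℝ) : Set (Fin n → ℝ) :=
  {y | ∀ i, a i ≤ y i ∧ y i < a i + r}

/-- The dyadic cube `2^{-k}(m + [0,1)^n)`. -/
def dyadicCube (k : ℤ) (mv : Fin n → ℤ) : Set (Fin n → ℝ) :=
  cube (fun i => (mv i : ℝ) * (2 : ℝ) ^ (-k)) ((2 : ℝ) ^ (-k))

/-- The concentric triple `3Q` of the cube with corner `a` and side `r`. -/
def tripleCube (a : Fin n → ℝ) (r : ℝ) : Set (Fin n → ℝ) :=
  cube (fun i => a i - r) (3 * r)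

/-- The Morrey norm `‖f‖_{M^{p,p₀}}`. -/
def morreyNorm (p p0 : ℝ) (f : (Fin n → ℝ) → ℝ) : ℝ≥0∞ :=
  ⨆ (a : Fin n → ℝ) (r : ℝ) (_ : 0 < r),
    volume (cube a r) ^ (1 / p0 - 1 / p) *
      (∫⁻ x in cube a r, ENNReal.ofReal |f x| ^ p) ^ (1 / p)

/-- The product Morrey norm `‖f⃗‖_{M^{P⃗,p₀}}`. -/
def prodMorreyNorm {m : ℕ} (P : Fin m → ℝ) (p p0 : ℝ)
    (f : Fin m → (Fin n → ℝ) → ℝ) : ℝ≥0∞ :=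
  ⨆ (a : Fin n → ℝ) (r : ℝ) (_ : 0 < r),
    volume (cube a r) ^ (1 / p0 - 1 / p) *
      ∏ j, (∫⁻ x in cube a r, ENNReal.ofReal |f j x| ^ P j) ^ (1 / P j)

/-- The Radon–Morrey norm `‖g‖_{M_μ^{q,q₀}}`. -/
def radonMorreyNorm (μ : Measure (Fin n → ℝ)) (q q0 : ℝ)
    (g : (Fin n → ℝ) → ℝ≥0∞) : ℝ≥0∞ :=
  ⨆ (a : Fin n → ℝ) (r : ℝ) (_ : 0 < r),
    volume (cube a r) ^ (1 / q0 - 1 / q) * (∫⁻ x in cube a r, g x ^ q ∂μ) ^ (1 / q)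

/-- The growth norm `‖μ‖_β := sup_Q μ(Q)/ℓ_Q^β`. -/
def measureGrowthNorm (μ : Measure (Fin n → ℝ)) (β : ℝ) : ℝ≥0∞ :=
  ⨆ (a : Fin n → ℝ) (r : ℝ) (_ : 0 < r), μ (cube a r) / ENNReal.ofReal r ^ β

/-- The `m`-sublinear fractional maximal operator `𝔐_α`. -/
def fracMaximal {m : ℕ} (α : ℝ) (f : Fin m → (Fin n → ℝ) → ℝ)
    (x : Fin n → ℝ) : ℝ≥0∞ :=
  ⨆ (a : Fin n → ℝ) (r : ℝ) (_ : 0 < r) (_ : x ∈ cube a r),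
    ENNReal.ofReal r ^ (α - (m : ℝ) * n) *
      ∏ j, ∫⁻ y in cube a r, ENNReal.ofReal |f j y|

/-- The dyadic `m`-sublinear fractional maximal operator `𝔐_α^𝒟`. -/
def dyadicFracMaximal {m : ℕ} (α : ℝ) (f : Fin m → (Fin n → ℝ) → ℝ)
    (x : Fin n → ℝ) : ℝ≥0∞ :=
  ⨆ (k : ℤ) (mv : Fin n → ℤ) (_ : x ∈ dyadicCube k mv),
    ENNReal.ofReal ((2 : ℝ) ^ (-k)) ^ (α - (m : ℝ) * n) *
      ∏ j, ∫⁻ y in dyadicCube k mv, ENNReal.ofReal |f j y|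

/-- The dyadic `m`-linear fractional integral operator `ℑ_α^𝒟`. -/
def dyadicFracIntegral {m : ℕ} (α : ℝ) (f : Fin m → (Fin n → ℝ) → ℝ)
    (x : Fin n → ℝ) : ℝ≥0∞ :=
  ∑' qk : ℤ × (Fin n → ℤ),
    (dyadicCube qk.1 qk.2).indicator
      (fun _ => ENNReal.ofReal ((2 : ℝ) ^ (-qk.1)) ^ (α - (m : ℝ) * n) *
        ∏ j, ∫⁻ y in dyadicCube qk.1 qk.2, ENNReal.ofReal |f j y|) x

/-- The `m`-linear fractional integral operator `ℑ_α` (with Euclidean distances). -/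
def fracIntegral {m : ℕ} (α : ℝ) (f : Fin m → (Fin n → ℝ) → ℝ)
    (x : Fin n → ℝ) : ℝ≥0∞ :=
  ∫⁻ y : Fin m → Fin n → ℝ,
    (∏ j, ENNReal.ofReal |f j (y j)|) /
      ENNReal.ofReal ((∑ j, Real.sqrt (∑ i, (x i - y j i) ^ 2)) ^ ((m : ℝ) * n - α))


private theorem lintegral_pi_prod' {X : Type*} [MeasurableSpace X] :
    ∀ (m : ℕ) (μ : Fin m → Measure X), (∀ j, SigmaFinite (μ j)) →
      ∀ (g : Fin m → X → ℝ≥0∞), (∀ j, Measurable (g j)) →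
      ∫⁻ y, ∏ j, g j (y j) ∂Measure.pi μ = ∏ j, ∫⁻ t, g j t ∂μ j := by
  intro m
  induction m with
  | zero => intro μ _ g _; simp
  | succ m ih =>
    intro μ hσ g hg
    haveI := hσ
    have hmp := (MeasureTheory.measurePreserving_piFinSuccAbove μ 0).symm
    have hmeas : Measurable fun y : Fin (m + 1) → X => ∏ j, g j (y j) :=
      Finset.measurable_prod _ fun j _ => (hg j).comp (measurable_pi_apply j)
    rw [← MeasurePreserving.lintegral_comp hmp hmeas]
    simp_rw [MeasurableEquiv.piFinSuccAbove_symm_apply, Fin.insertNthEquiv,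
      Fin.prod_univ_succ, Fin.insertNth_zero, Equiv.coe_fn_mk, Fin.cons_succ,
      Fin.zero_succAbove, Fin.cons_zero, cast_eq]
    have hright : Measurable fun z : Fin m → X => ∏ j, g (Fin.succ j) (z j) :=
      Finset.measurable_prod _ fun j _ => (hg _).comp (measurable_pi_apply j)
    rw [MeasureTheory.lintegral_prod_mul (hg 0).aemeasurable hright.aemeasurable]
    rw [ih _ (fun j => hσ _) _ (fun j => hg _)]

private lemma cube_eq_pi (a : Fin n → ℝ) (r : ℝ) :
    cube a r = Set.univ.pi fun i => Set.Ico (a i) (a i + r) := by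
  ext y; simp [cube, Set.mem_pi, Set.mem_Ico]

private lemma measurableSet_cube (a : Fin n → ℝ) (r : ℝ) : MeasurableSet (cube a r) := by
  rw [cube_eq_pi]; exact MeasurableSet.univ_pi fun i => measurableSet_Ico

private lemma volume_cube (a : Fin n → ℝ) (r : ℝ) :
    volume (cube a r) = ENNReal.ofReal r ^ n := by
  rw [cube_eq_pi, volume_pi_pi]
  simp [Real.volume_Ico]

theorem statement2 (hn : 0 < n) (m : ℕ) (hm : 0 < m) (α : ℝ)
    (hα0 : 0 < α) (hα : α < (m : ℝ) * n) :
    ∃ C : ℝ≥0∞, 0 < C ∧ C < ∞ ∧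
      ∀ f : Fin m → (Fin n → ℝ) → ℝ,
        (∀ j x, 0 ≤ f j x) → (∀ j, LocallyIntegrable (f j) volume) →
        ∀ x : Fin n → ℝ,
          fracIntegral α f x ≤
            C * ∑' qk : ℤ × (Fin n → ℤ),
              (dyadicCube qk.1 qk.2).indicator
                (fun _ => ENNReal.ofReal ((2 : ℝ) ^ (-qk.1)) ^ α *
                  ∏ j, (volume (dyadicCube qk.1 qk.2))⁻¹ *
                    ∫⁻ y in tripleCube (fun i => (qk.2 i : ℝ) * (2 : ℝ) ^ (-qk.1))
                      ((2 : ℝ) ^ (-qk.1)), ENNReal.ofReal (f j y)) x := by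
  have hβ0 : (0:ℝ) < (m : ℝ) * n - α := sub_pos.2 hα
  refine ⟨(2:ℝ≥0∞) ^ ((m : ℝ) * n - α), ENNReal.rpow_pos (by norm_num) (by norm_num),
    ENNReal.rpow_lt_top_of_nonneg hβ0.le (by norm_num), ?_⟩
  intro f hf0 hfl x
  set β : ℝ := (m : ℝ) * n - α with hβdef
  set f' : Fin m → (Fin n → ℝ) → ℝ := fun j => ((hfl j).aestronglyMeasurable).mk (f j) with hf'def
  have hf'm : ∀ j, Measurable (f' j) := fun j =>
    ((hfl j).aestronglyMeasurable).stronglyMeasurable_mk.measurable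
  have hff' : ∀ j, f j =ᵐ[volume] f' j := fun j => ((hfl j).aestronglyMeasurable).ae_eq_mk
  set S : (Fin m → Fin n → ℝ) → ℝ := fun y => ∑ j, Real.sqrt (∑ i, (x i - y j i) ^ 2) with hSdef
  have hSm : Measurable S := by fun_prop
  have hSnn : ∀ y, 0 ≤ S y := fun y => Finset.sum_nonneg fun j _ => Real.sqrt_nonneg _
  set P : (Fin m → Fin n → ℝ) → ℝ≥0∞ := fun y => ∏ j, ENNReal.ofReal |f' j (y j)| with hPdef
  have hPm : Measurable P :=
    Finset.measurable_prod _ fun j _ =>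
      (ENNReal.measurable_ofReal.comp (hf'm j).abs).comp (measurable_pi_apply j)
  set A : ℤ → Set (Fin m → Fin n → ℝ) :=
    fun k => S ⁻¹' Set.Ico ((2:ℝ) ^ (-k-1)) ((2:ℝ) ^ (-k)) with hAdef
  have hAm : ∀ k, MeasurableSet (A k) := fun k => hSm measurableSet_Ico
  set c : ℤ → ℝ≥0∞ := fun k => (ENNReal.ofReal (((2:ℝ) ^ (-k-1)) ^ β))⁻¹ with hcdef
  have hck : ∀ k, c k ≠ ⊤ := fun k =>
    ENNReal.inv_ne_top.2 (ENNReal.ofReal_pos.2 (Real.rpow_pos_of_pos (_root_.zpow_pos two_pos _) _)).ne'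
  set mv : ℤ → Fin n → ℤ := fun k i => ⌊x i * (2:ℝ) ^ k⌋ with hmvdef
  have hxQ : ∀ k, x ∈ dyadicCube k (mv k) := by
    intro k
    simp only [dyadicCube, cube, Set.mem_setOf_eq, hmvdef]
    intro i
    have ht : (0:ℝ) < (2:ℝ) ^ k := _root_.zpow_pos two_pos _
    have hinv : (2:ℝ) ^ (-k) = ((2:ℝ) ^ k)⁻¹ := zpow_neg 2 k
    have h1 : ((⌊x i * 2 ^ k⌋ : ℝ)) ≤ x i * 2 ^ k := Int.floor_le _
    have h2 : x i * 2 ^ k < ⌊x i * 2 ^ k⌋ + 1 := Int.lt_floor_add_one _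
    constructor
    · rw [hinv, mul_inv_le_iff₀ ht]; exact h1
    · have h3 : x i * 2 ^ k * ((2:ℝ) ^ k)⁻¹ < ((⌊x i * 2 ^ k⌋ : ℝ) + 1) * ((2:ℝ) ^ k)⁻¹ :=
        mul_lt_mul_of_pos_right h2 (inv_pos.2 ht)
      rw [mul_assoc, mul_inv_cancel₀ ht.ne', mul_one] at h3
      rw [hinv]
      linarith
  set G : ℤ × (Fin n → ℤ) → ℝ≥0∞ := fun qk =>
    (dyadicCube qk.1 qk.2).indicator
      (fun _ => ENNReal.ofReal ((2 : ℝ) ^ (-qk.1)) ^ α *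
        ∏ j, (volume (dyadicCube qk.1 qk.2))⁻¹ *
          ∫⁻ y in tripleCube (fun i => (qk.2 i : ℝ) * (2 : ℝ) ^ (-qk.1))
            ((2 : ℝ) ^ (-qk.1)), ENNReal.ofReal (f j y)) x with hGdef
  -- Step 1 : rewrite the fractional integral with measurable representatives
  have step1 : fracIntegral α f x = ∫⁻ y, P y / ENNReal.ofReal (S y ^ β) := by
    unfold fracIntegral
    refine lintegral_congr_ae ?_
    have hae : ∀ᵐ y : Fin m → Fin n → ℝ, ∀ j : Fin m, f j (y j) = f' j (y j) := by
      have h := Measure.ae_eq_pi (μ := fun _ : Fin m => (volume : Measure (Fin n → ℝ)))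
        (f := fun j => f j) (f' := fun j => f' j) (fun j => hff' j)
      rw [← volume_pi] at h
      filter_upwards [h] with y hy j
      exact congrFun hy j
    filter_upwards [hae] with y hy
    have h1 : (∏ j, ENNReal.ofReal |f j (y j)|) = P y := by
      rw [hPdef]
      exact Finset.prod_congr rfl fun j _ => by rw [hy j]
    rw [h1]
  -- Step 2 : pointwise domination
  have step2 : ∀ y, P y / ENNReal.ofReal (S y ^ β) ≤
      (∑' k : ℤ, (A k).indicator (fun y' => c k * P y') y) +
        ({y | S y = 0}).indicator (fun _ => (⊤:ℝ≥0∞)) y := by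
    intro y
    rcases eq_or_lt_of_le (hSnn y) with h0 | h0
    · rw [Set.indicator_of_mem (show y ∈ {y | S y = 0} from h0.symm), add_top]
      exact le_top
    · obtain ⟨l, hl⟩ := exists_mem_Ico_zpow h0 one_lt_two
      set k : ℤ := -(l+1) with hk
      have e1 : -k - 1 = l := by omega
      have e2 : -k = l + 1 := by omega
      have hyA : y ∈ A k := by
        simp only [hAdef, Set.mem_preimage]
        rw [e1, e2]
        exact hl
      have hb : P y / ENNReal.ofReal (S y ^ β) ≤ c k * P y := by
        have hSlb : ((2:ℝ) ^ (-k-1)) ≤ S y := by rw [e1]; exact hl.1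
        have hpow : ENNReal.ofReal (((2:ℝ) ^ (-k-1)) ^ β) ≤ ENNReal.ofReal (S y ^ β) :=
          ENNReal.ofReal_le_ofReal
            (Real.rpow_le_rpow (_root_.zpow_pos two_pos _).le hSlb hβ0.le)
        calc P y / ENNReal.ofReal (S y ^ β)
            ≤ P y / ENNReal.ofReal (((2:ℝ) ^ (-k-1)) ^ β) := ENNReal.div_le_div_left hpow _
          _ = c k * P y := by simp only [hcdef]; rw [div_eq_mul_inv, mul_comm]
      refine le_add_right (hb.trans ?_)
      have h := ENNReal.le_tsum (f := fun k : ℤ => (A k).indicator (fun y' => c k * P y') y) k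
      rwa [Set.indicator_of_mem hyA] at h
  -- the zero set is null
  have hset0 : MeasurableSet {y : Fin m → Fin n → ℝ | S y = 0} := hSm (measurableSet_singleton 0)
  have hnull : volume {y : Fin m → Fin n → ℝ | S y = 0} = 0 := by
    have hsub : {y : Fin m → Fin n → ℝ | S y = 0} ⊆ {fun _ => x} := by
      intro y hy
      have hy' : S y = 0 := hy
      have hterm : ∀ j ∈ Finset.univ, Real.sqrt (∑ i, (x i - y j i) ^ 2) = 0 := by
        refine (Finset.sum_eq_zero_iff_of_nonneg (fun j _ => Real.sqrt_nonneg _)).1 ?_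
        rw [hSdef] at hy'
        exact hy'
      have hyx : y = fun _ => x := by
        funext j i
        have h1 := hterm j (Finset.mem_univ j)
        have hnn : 0 ≤ ∑ i, (x i - y j i) ^ 2 := Finset.sum_nonneg fun i _ => sq_nonneg _
        have h2 : (∑ i, (x i - y j i) ^ 2) = 0 :=
          le_antisymm (Real.sqrt_eq_zero'.1 h1) hnn
        have h3 := (Finset.sum_eq_zero_iff_of_nonneg (fun i _ => sq_nonneg _)).1 h2 i
          (Finset.mem_univ i)
        have h4 : x i - y j i = 0 := by
          have := pow_eq_zero_iff (n := 2) (by norm_num) |>.1 h3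
          exact this
        linarith
      simpa using hyx
    refine measure_mono_null hsub ?_
    have h1 : ({fun _ => x} : Set (Fin m → Fin n → ℝ)) =
        Set.univ.pi fun _ : Fin m => ({x} : Set (Fin n → ℝ)) := (Set.univ_pi_singleton _).symm
    rw [h1, volume_pi_pi]
    have hx0 : volume ({x} : Set (Fin n → ℝ)) = 0 := by
      rw [show ({x} : Set (Fin n → ℝ)) = Set.univ.pi fun i => ({x i} : Set ℝ) from
        (Set.univ_pi_singleton _).symm, volume_pi_pi]
      exact Finset.prod_eq_zero (Finset.mem_univ ⟨0, hn⟩) Real.volume_singleton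
    exact Finset.prod_eq_zero (Finset.mem_univ ⟨0, hm⟩) hx0
  -- key estimate for each scale
  have key : ∀ k : ℤ, c k * ∫⁻ y in A k, P y ≤ (2:ℝ≥0∞) ^ β * G (k, mv k) := by
    intro k
    simp only [hGdef]
    set r : ℝ := (2:ℝ) ^ (-k) with hrdef
    have hr : (0:ℝ) < r := _root_.zpow_pos two_pos _
    set T : Set (Fin n → ℝ) := tripleCube (fun i => (mv k i : ℝ) * r) r with hTdef
    have hTm : MeasurableSet T := by
      rw [hTdef]; unfold tripleCube; exact measurableSet_cube _ _
    have hsub : A k ⊆ Set.univ.pi fun _ : Fin m => T := by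
      intro y hy j _
      have hyS : S y < r := by
        rw [hrdef]
        have : S y ∈ Set.Ico ((2:ℝ) ^ (-k-1)) ((2:ℝ) ^ (-k)) := hy
        exact this.2
      have hcoord : ∀ i, |x i - y j i| < r := by
        intro i
        have h1 : Real.sqrt (∑ i, (x i - y j i) ^ 2) ≤ S y :=
          Finset.single_le_sum (f := fun j => Real.sqrt (∑ i, (x i - y j i) ^ 2))
            (fun j _ => Real.sqrt_nonneg _) (Finset.mem_univ j)
        have h2 : |x i - y j i| ≤ Real.sqrt (∑ i, (x i - y j i) ^ 2) := by
          rw [← Real.sqrt_sq_eq_abs]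
          exact Real.sqrt_le_sqrt (Finset.single_le_sum
            (f := fun i => (x i - y j i) ^ 2) (fun i _ => sq_nonneg _) (Finset.mem_univ i))
        linarith
      have hx' := hxQ k
      simp only [dyadicCube, cube, Set.mem_setOf_eq] at hx'
      rw [← hrdef] at hx'
      simp only [hTdef, tripleCube, cube, Set.mem_setOf_eq]
      intro i
      have h5 := abs_lt.1 (hcoord i)
      have h6 := hx' i
      constructor
      · linarith [h6.1, h5.2]
      · linarith [h6.2, h5.1]
    have hbound : ∫⁻ y in A k, P y ≤ ∏ j, ∫⁻ t in T, ENNReal.ofReal |f' j t| := by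
      refine le_trans (lintegral_mono_set hsub) (le_of_eq ?_)
      have hind : ∀ y : Fin m → Fin n → ℝ,
          (Set.univ.pi fun _ : Fin m => T).indicator P y =
          ∏ j, T.indicator (fun t => ENNReal.ofReal |f' j t|) (y j) := by
        intro y
        by_cases hy : y ∈ Set.univ.pi fun _ : Fin m => T
        · rw [Set.indicator_of_mem hy, hPdef]
          refine Finset.prod_congr rfl fun j _ => ?_
          have hj : y j ∈ T := hy j (Set.mem_univ j)
          rw [Set.indicator_of_mem hj]
        · rw [Set.indicator_of_notMem hy]
          simp only [Set.mem_pi, Set.mem_univ, forall_true_left] at hy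
          push_neg at hy
          obtain ⟨j, hj⟩ := hy
          symm
          apply Finset.prod_eq_zero (Finset.mem_univ j)
          rw [Set.indicator_of_notMem hj]
      calc ∫⁻ y in (Set.univ.pi fun _ : Fin m => T), P y
          = ∫⁻ y : Fin m → Fin n → ℝ, ∏ j, T.indicator (fun t => ENNReal.ofReal |f' j t|) (y j) := by
            rw [← lintegral_indicator (MeasurableSet.univ_pi fun _ => hTm)]
            exact lintegral_congr hind
        _ = ∏ j, ∫⁻ t, T.indicator (fun t => ENNReal.ofReal |f' j t|) t := by
            rw [volume_pi]
            exact lintegral_pi_prod' m _ (fun j => inferInstance) _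
              (fun j => ((ENNReal.measurable_ofReal.comp (hf'm j).abs).indicator hTm))
        _ = ∏ j, ∫⁻ t in T, ENNReal.ofReal |f' j t| :=
            Finset.prod_congr rfl fun j _ => lintegral_indicator hTm _
    have hIconv : ∀ j : Fin m, ∫⁻ t in T, ENNReal.ofReal |f' j t| =
        ∫⁻ t in T, ENNReal.ofReal (f j t) := by
      intro j
      refine lintegral_congr_ae ?_
      filter_upwards [ae_restrict_of_ae (hff' j)] with t ht
      rw [← ht, abs_of_nonneg (hf0 j t)]
    set u : ℝ≥0∞ := ENNReal.ofReal r with hudef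
    have hu0 : u ≠ 0 := (ENNReal.ofReal_pos.2 hr).ne'
    have huT : u ≠ ⊤ := ENNReal.ofReal_ne_top
    have hvol : volume (dyadicCube k (mv k)) = u ^ n := by
      rw [hudef, hrdef]
      unfold dyadicCube
      exact volume_cube _ _
    have hB : (((u ^ n)⁻¹) ^ m : ℝ≥0∞) = u ^ (-((n:ℝ) * m)) := by
      rw [← ENNReal.inv_pow, ← pow_mul, ← ENNReal.rpow_natCast u (n * m), ← ENNReal.rpow_neg]
      congr 1; push_cast; ring
    have hA' : u ^ α * u ^ (-((n:ℝ) * m)) = u ^ (α - (m:ℝ) * n) := by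
      rw [← ENNReal.rpow_add _ _ hu0 huT]; congr 1; ring
    have hC : c k = (2:ℝ≥0∞) ^ β * u ^ (α - (m:ℝ) * n) := by
      have h2k : (2:ℝ) ^ (-k-1) = r * 2⁻¹ := by
        rw [hrdef, ← zpow_neg_one (2:ℝ), ← zpow_add₀ (two_ne_zero (α := ℝ))]
        congr 1
      have hofr : ENNReal.ofReal ((2:ℝ) ^ (-k-1)) = u * 2⁻¹ := by
        rw [h2k, ENNReal.ofReal_mul hr.le, hudef]
        congr 1
        rw [ENNReal.ofReal_inv_of_pos two_pos, ENNReal.ofReal_ofNat]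
      have h1 : c k = (ENNReal.ofReal ((2:ℝ) ^ (-k-1))) ^ (-β) := by
        rw [hcdef, ENNReal.rpow_neg, ENNReal.ofReal_rpow_of_pos (_root_.zpow_pos two_pos _)]
      rw [h1, hofr, ENNReal.mul_rpow_of_ne_top huT (by norm_num),
        ENNReal.inv_rpow, ← ENNReal.rpow_neg, neg_neg, mul_comm]
      congr 1
      rw [hβdef]; congr 1; ring
    rw [Set.indicator_of_mem (hxQ k)]
    calc c k * ∫⁻ y in A k, P y
        ≤ c k * ∏ j, ∫⁻ t in T, ENNReal.ofReal (f j t) := by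
          refine mul_le_mul_right ?_ _
          exact hbound.trans (le_of_eq (Finset.prod_congr rfl fun j _ => hIconv j))
      _ = (2:ℝ≥0∞) ^ β * (u ^ α *
            ∏ j, (volume (dyadicCube k (mv k)))⁻¹ * ∫⁻ t in T, ENNReal.ofReal (f j t)) := by
          rw [Finset.prod_mul_distrib, Finset.prod_const, Finset.card_univ, Fintype.card_fin,
            hvol, hC, hB, ← hA']
          ring
  -- assemble
  calc fracIntegral α f x
      = ∫⁻ y, P y / ENNReal.ofReal (S y ^ β) := step1
    _ ≤ ∫⁻ y, ((∑' k : ℤ, (A k).indicator (fun y' => c k * P y') y) +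
          ({y | S y = 0}).indicator (fun _ => (⊤:ℝ≥0∞)) y) := lintegral_mono step2
    _ = (∑' k : ℤ, ∫⁻ y, (A k).indicator (fun y' => c k * P y') y) +
          ⊤ * volume {y : Fin m → Fin n → ℝ | S y = 0} := by
        rw [lintegral_add_right _ (measurable_const.indicator hset0),
          lintegral_tsum (fun k => ((hPm.const_mul (c k)).indicator (hAm k)).aemeasurable),
          lintegral_indicator hset0, setLIntegral_const]
    _ = ∑' k : ℤ, c k * ∫⁻ y in A k, P y := by
        rw [hnull, mul_zero, add_zero]
        exact tsum_congr fun k => by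
          rw [lintegral_indicator (hAm k), lintegral_const_mul' _ _ (hck k)]
    _ ≤ ∑' k : ℤ, (2:ℝ≥0∞) ^ β * G (k, mv k) := ENNReal.tsum_le_tsum key
    _ = (2:ℝ≥0∞) ^ β * ∑' k : ℤ, G (k, mv k) := ENNReal.tsum_mul_left
    _ ≤ (2:ℝ≥0∞) ^ β * ∑' qk : ℤ × (Fin n → ℤ), G qk := by
        refine mul_le_mul_right ?_ _
        exact ENNReal.tsum_comp_le_tsum_of_injective
          (f := fun k : ℤ => ((k, mv k) : ℤ × (Fin n → ℤ)))
          (fun a b h => congrArg Prod.fst h) G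
end
end

section
/- For every vector of nonnegative locally integrable functions f⃗ = (f₁,…,f_m) on ℝⁿ there exists an η-sparse family S ⊆ D (for some η ∈ (0,1) depending only on n, m) such that pointwise I_α^D(f⃗) ≲ ∑_{S ∈ S} |S|^{α/n} ∏_{j=1}^m ( |S|^{-1} ∫_S f_j(y) dy ) 1_S. -/
open MeasureTheory ENNReal

noncomputable section

variable {n : ℕ}

/-!
Write `A(Q) = ∏ⱼ ⨍_Q fⱼ`. The dyadic fractional integral at `x` is `∑ₖ |Qₖ|^{α/n} A(Qₖ)`,
summed over the dyadic cubes `Qₖ ∋ x` of generation `k`. With `Λ = 2^{mn} (2m)^m`, the stopping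
cubes are the maximal cubes with `A(Q) ≥ Λ^ν`, `ν ∈ ℤ`. If `Λ^ν ≤ A(Qₖ) < Λ^{ν+1}`, the largest
ancestor `Qⱼ` of `Qₖ` with `A(Qⱼ) ≥ Λ^ν` is a stopping cube and
`|Qₖ|^{α/n} A(Qₖ) ≤ Λ 2^{-α(k-j)} |Qⱼ|^{α/n} A(Qⱼ)`, so the sum is controlled by a geometric
series over the stopping cubes containing `x`.

A stopping cube `T` strictly inside a stopping cube `S` has `A(T) > (2m)^m A(S)`, hence the
average of some `fⱼ` on `T` exceeds `2m` times its average on `S`. By the weak type (1,1) bound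
for the dyadic maximal function, such cubes cover at most half of `S`, so `S` minus the smaller
stopping cubes keeps half of its measure.

The largest such ancestor may fail to exist, but only in an orthant `σ` in which arbitrarily
large cubes adjacent to the origin reach a common level. There all cubes adjacent to the origin
in `σ` are selected instead: they make the right-hand side infinite on `σ`, and, being nested,
each keeps its difference with the next one.
-/

section

variable {α : Type*} {𝒜 : Set (Set α)}

lemma Set.sUnion_eq_sUnion_maximal (hfin : ∀ A ∈ 𝒜, {B ∈ 𝒜 | A ⊆ B}.Finite) :
    ⋃₀ 𝒜 = ⋃₀ {A | Maximal (· ∈ 𝒜) A} := by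
  refine subset_antisymm (fun x ⟨A, hA, hxA⟩ => ?_) (Set.sUnion_mono fun A hA => hA.prop)
  obtain ⟨B, hAB, hB⟩ := (hfin A hA).exists_le_maximal ⟨hA, subset_rfl⟩
  exact ⟨B, ⟨hB.prop.1, fun C hC hBC => hB.2 ⟨hC, hAB.trans hBC⟩ hBC⟩, hAB hxA⟩

lemma Set.pairwise_disjoint_maximal
    (hnest : ∀ A ∈ 𝒜, ∀ B ∈ 𝒜, A ⊆ B ∨ B ⊆ A ∨ Disjoint A B) :
    {A | Maximal (· ∈ 𝒜) A}.Pairwise Disjoint := by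
  intro A hA B hB hAB
  rcases hnest A hA.prop B hB.prop with h | h | h
  · exact absurd (le_antisymm h (hA.2 hB.prop h)) hAB
  · exact absurd (le_antisymm (hB.2 hA.prop h) h) hAB
  · exact h

end

lemma two_inv_mul_measure_le_measure_diff {α : Type*} [MeasurableSpace α] {μ : Measure α}
    {A B : Set α} (hA : μ A ≠ ⊤) (hB : 2 * μ B ≤ μ A) : 2⁻¹ * μ A ≤ μ (A \ B) := by
  have hB' : μ B ≤ μ A / 2 := by rwa [ENNReal.le_div_iff_mul_le (by simp) (by simp), mul_comm]
  calc 2⁻¹ * μ A = μ A - μ A / 2 := by rw [ENNReal.sub_half hA, ENNReal.div_eq_inv_mul]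
    _ ≤ μ A - μ B := tsub_le_tsub_left hB' _
    _ ≤ μ (A \ B) := le_measure_sdiff

lemma two_rpow_neg_mul_eq {j k : ℤ} (hjk : j ≤ k) (α : ℝ) :
    (2 : ℝ≥0∞) ^ (-(k : ℝ) * α) = (2 ^ (-α)) ^ (k - j).toNat * 2 ^ (-(j : ℝ) * α) := by
  rw [← ENNReal.rpow_natCast, ← ENNReal.rpow_mul, ← ENNReal.rpow_add _ _ two_ne_zero ofNat_ne_top]
  congr 1
  have : ((k - j).toNat : ℝ) = k - j := by exact_mod_cast Int.toNat_of_nonneg (sub_nonneg.2 hjk)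
  rw [this]; ring

lemma tsum_le_of_forall_le_geometric {a b : ℤ → ℝ≥0∞} {r : ℝ≥0∞}
    (h : ∀ k, ∃ j ≤ k, a k ≤ r ^ (k - j).toNat * b j) : ∑' k, a k ≤ (1 - r)⁻¹ * ∑' j, b j := by
  choose J hJk hJ using h
  have hinj : Function.Injective fun k => (J k, (k - J k).toNat) := by
    intro k k' hkk'
    simp only [Prod.mk.injEq] at hkk'
    have := hJk k; have := hJk k'
    omega
  calc ∑' k, a k ≤ ∑' k, r ^ (k - J k).toNat * b (J k) := ENNReal.tsum_le_tsum hJ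
    _ ≤ ∑' p : ℤ × ℕ, r ^ p.2 * b p.1 :=
        ENNReal.tsum_comp_le_tsum_of_injective hinj fun p => r ^ p.2 * b p.1
    _ = (1 - r)⁻¹ * ∑' j, b j := by
        rw [ENNReal.tsum_prod (f := fun j d => r ^ d * b j), ← ENNReal.tsum_mul_left]
        simp_rw [ENNReal.tsum_mul_right, ENNReal.tsum_geometric]

namespace DyadicSparse

variable {m : ℕ}

lemma cube_eq_pi (a : Fin n → ℝ) (r : ℝ) :
    cube a r = Set.univ.pi fun i => Set.Ico (a i) (a i + r) := by
  ext y; simp [cube, Set.mem_pi]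

lemma measurableSet_cube (a : Fin n → ℝ) (r : ℝ) : MeasurableSet (cube a r) := by
  rw [cube_eq_pi]; exact .univ_pi fun _ => measurableSet_Ico

lemma volume_cube (a : Fin n → ℝ) (r : ℝ) : volume (cube a r) = ENNReal.ofReal r ^ n := by
  simp [cube_eq_pi, volume_pi_pi, Real.volume_Ico]

/-- The translation parameter of the generation-`k` dyadic cube containing `x`. -/
def dyadicCoord (k : ℤ) (x : Fin n → ℝ) : Fin n → ℤ := fun i => ⌊(2 : ℝ) ^ k * x i⌋

lemma mem_dyadicCube_iff {k : ℤ} {v : Fin n → ℤ} {x : Fin n → ℝ} :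
    x ∈ dyadicCube k v ↔ dyadicCoord k x = v := by
  have h2k : (0 : ℝ) < 2 ^ k := by positivity
  simp only [dyadicCube, cube, Set.mem_ofPred_eq, funext_iff, dyadicCoord, Int.floor_eq_iff]
  refine forall_congr' fun i => ?_
  have e : (v i : ℝ) * 2 ^ (-k) + 2 ^ (-k) = (v i + 1) / 2 ^ k := by
    rw [zpow_neg]; field_simp
  rw [e, zpow_neg, ← div_eq_mul_inv, div_le_iff₀ h2k, lt_div_iff₀ h2k, mul_comm (x i)]

lemma mem_dyadicCube_dyadicCoord (k : ℤ) (x : Fin n → ℝ) : x ∈ dyadicCube k (dyadicCoord k x) :=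
  mem_dyadicCube_iff.2 rfl

lemma dyadicCoord_of_le {j k : ℤ} (hjk : j ≤ k) (x : Fin n → ℝ) :
    dyadicCoord j x = fun i => dyadicCoord k x i / 2 ^ (k - j).toNat := by
  funext i
  have e : (2 : ℝ) ^ j * x i = 2 ^ k * x i / ((2 ^ (k - j).toNat : ℕ) : ℝ) := by
    rw [Nat.cast_pow, Nat.cast_ofNat, ← zpow_natCast, Int.toNat_of_nonneg (sub_nonneg.2 hjk),
      zpow_sub₀ two_ne_zero]
    field_simp
  simp only [dyadicCoord]
  rw [e, Int.floor_div_natCast]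
  push_cast; rfl

lemma dyadicCube_subset_of_le {j k : ℤ} {v w : Fin n → ℤ} {x : Fin n → ℝ} (hjk : j ≤ k)
    (hv : x ∈ dyadicCube k v) (hw : x ∈ dyadicCube j w) : dyadicCube k v ⊆ dyadicCube j w := by
  intro y hy
  rw [mem_dyadicCube_iff] at hv hw hy ⊢
  rw [dyadicCoord_of_le hjk, hy, ← hv, ← dyadicCoord_of_le hjk, hw]

lemma ofReal_two_zpow (k : ℤ) : ENNReal.ofReal ((2 : ℝ) ^ (-k)) = 2 ^ (-(k : ℝ)) := by
  rw [← Real.rpow_intCast, ← ENNReal.ofReal_rpow_of_pos two_pos, ENNReal.ofReal_ofNat]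
  push_cast; rfl

abbrev DyadicIndex (n : ℕ) := ℤ × (Fin n → ℤ)

namespace DyadicIndex

def cube (q : DyadicIndex n) : Set (Fin n → ℝ) := dyadicCube q.1 q.2

def corner (q : DyadicIndex n) : Fin n → ℝ := fun i => q.2 i * 2 ^ (-q.1)

lemma corner_mem (q : DyadicIndex n) : q.corner ∈ q.cube := by
  rw [cube, mem_dyadicCube_iff]
  funext i
  have h2 : (2 : ℝ) ^ q.1 ≠ 0 := zpow_ne_zero q.1 two_ne_zero
  simp [dyadicCoord, corner, mul_left_comm (2 ^ q.1 : ℝ), mul_inv_cancel₀ h2]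

lemma measurableSet_cube (q : DyadicIndex n) : MeasurableSet q.cube :=
  DyadicSparse.measurableSet_cube _ _

lemma volume_cube (q : DyadicIndex n) : volume q.cube = 2 ^ (-(q.1 : ℝ) * n) := by
  rw [cube, dyadicCube, DyadicSparse.volume_cube, ofReal_two_zpow, ← ENNReal.rpow_natCast,
    ← ENNReal.rpow_mul]

lemma volume_cube_ne_zero (q : DyadicIndex n) : volume q.cube ≠ 0 := by
  rw [volume_cube]; exact (ENNReal.rpow_pos two_pos ofNat_ne_top).ne'

lemma volume_cube_ne_top (q : DyadicIndex n) : volume q.cube ≠ ⊤ := by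
  rw [volume_cube]; exact ENNReal.rpow_ne_top_of_ne_zero two_ne_zero ofNat_ne_top

lemma subset_or_subset_or_disjoint (p q : DyadicIndex n) :
    p.cube ⊆ q.cube ∨ q.cube ⊆ p.cube ∨ Disjoint p.cube q.cube := by
  by_cases hd : Disjoint p.cube q.cube
  · exact .inr (.inr hd)
  obtain ⟨x, hp, hq⟩ := Set.not_disjoint_iff.1 hd
  rcases le_total p.1 q.1 with h | h
  · exact .inr (.inl (dyadicCube_subset_of_le h hq hp))
  · exact .inl (dyadicCube_subset_of_le h hp hq)

lemma le_of_cube_subset (hn : 0 < n) {p q : DyadicIndex n} (h : p.cube ⊆ q.cube) : q.1 ≤ p.1 := by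
  by_contra! hlt
  have hvol := measure_mono (μ := volume) h
  rw [volume_cube, volume_cube] at hvol
  refine hvol.not_gt (ENNReal.rpow_lt_rpow_of_exponent_lt one_lt_two ofNat_ne_top ?_)
  have : (0 : ℝ) < n := by exact_mod_cast hn
  have : (p.1 : ℝ) < q.1 := by exact_mod_cast hlt
  nlinarith

lemma cube_injective (hn : 0 < n) : Function.Injective (cube : DyadicIndex n → _) := by
  intro p q h
  have hgen : p.1 = q.1 := le_antisymm (le_of_cube_subset hn h.ge) (le_of_cube_subset hn h.le)
  have hq : p.corner ∈ q.cube := h ▸ p.corner_mem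
  have hp := p.corner_mem
  rw [cube, mem_dyadicCube_iff] at hp hq
  exact Prod.ext hgen (hp.symm.trans (hgen ▸ hq))

lemma lt_of_cube_ssubset (hn : 0 < n) {p q : DyadicIndex n} (h : p.cube ⊂ q.cube) : q.1 < p.1 := by
  refine (le_of_cube_subset hn h.subset).lt_of_ne fun heq => h.not_subset ?_
  exact dyadicCube_subset_of_le heq.ge (h.subset p.corner_mem) p.corner_mem

def parent (q : DyadicIndex n) : DyadicIndex n := (q.1 - 1, dyadicCoord (q.1 - 1) q.corner)

lemma cube_subset_parent (q : DyadicIndex n) : q.cube ⊆ q.parent.cube :=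
  dyadicCube_subset_of_le (by simp [parent]) q.corner_mem (mem_dyadicCube_dyadicCoord _ _)

lemma cube_ssubset_parent (hn : 0 < n) (q : DyadicIndex n) : q.cube ⊂ q.parent.cube := by
  refine q.cube_subset_parent.ssubset_of_ne fun h => ?_
  have := congrArg Prod.fst (cube_injective hn h)
  simp [parent] at this
  omega

lemma volume_parent (q : DyadicIndex n) : volume q.parent.cube = 2 ^ n * volume q.cube := by
  rw [volume_cube, volume_cube, ← ENNReal.rpow_natCast,
    ← ENNReal.rpow_add _ _ two_ne_zero ofNat_ne_top, parent]
  push_cast; ring_nf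

end DyadicIndex

/-- The orthant of `x`, encoded as the translation parameter of the dyadic cubes of
large side length that contain `x`. -/
def orthant (x : Fin n → ℝ) : Fin n → ℤ := fun i => if 0 ≤ x i then 0 else -1

lemma orthant_eq_of_mem {k : ℤ} {v : Fin n → ℤ} {x : Fin n → ℝ} (hx : x ∈ dyadicCube k v) :
    orthant x = fun i => if 0 ≤ v i then 0 else -1 := by
  rw [mem_dyadicCube_iff] at hx
  subst hx
  funext i
  simp [orthant, dyadicCoord, Int.floor_nonneg,
    mul_nonneg_iff_of_pos_left (zpow_pos (two_pos (α := ℝ)) k)]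

lemma exists_dyadicCoord_eq_orthant (x : Fin n → ℝ) :
    ∃ k₀ : ℤ, ∀ k ≤ k₀, dyadicCoord k x = orthant x := by
  obtain ⟨N, hN⟩ := pow_unbounded_of_one_lt (∑ i, |x i|) (one_lt_two (α := ℝ))
  refine ⟨-N, fun k hk => funext fun i => ?_⟩
  have hsmall : |(2 : ℝ) ^ k * x i| < 1 := by
    rw [abs_mul, abs_of_pos (zpow_pos two_pos k)]
    calc (2 : ℝ) ^ k * |x i| ≤ 2 ^ (-N : ℤ) * ∑ i, |x i| := by
          gcongr
          · exact one_le_two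
          · exact Finset.single_le_sum (fun i _ => abs_nonneg (x i)) (Finset.mem_univ i)
      _ < 2 ^ (-N : ℤ) * 2 ^ N := by gcongr
      _ = 1 := by rw [zpow_neg, zpow_natCast, inv_mul_cancel₀ (by positivity)]
  obtain ⟨hlo, hhi⟩ := abs_lt.1 hsmall
  simp only [dyadicCoord, orthant]
  split_ifs with h
  · exact Int.floor_eq_zero_iff.2 ⟨by positivity, hhi⟩
  · rw [Int.floor_eq_iff]
    have : (2 : ℝ) ^ k * x i < 0 := mul_neg_of_pos_of_neg (zpow_pos two_pos k) (not_le.1 h)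
    push_cast; constructor <;> linarith

lemma dyadicCube_orthant_subset (x : Fin n → ℝ) {k k' : ℤ} (hkk' : k ≤ k') :
    dyadicCube k' (orthant x) ⊆ dyadicCube k (orthant x) := by
  intro y hy
  rw [mem_dyadicCube_iff] at hy ⊢
  rw [dyadicCoord_of_le hkk', hy]
  funext i
  simp only [orthant]
  split_ifs
  · exact Int.zero_ediv _
  · exact Int.ediv_eq_neg_one_of_neg_of_le (by norm_num) (one_le_pow₀ one_le_two)

namespace DyadicIndex

lemma orthant_corner_eq_of_mem {q : DyadicIndex n} {x : Fin n → ℝ} (hx : x ∈ q.cube) :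
    orthant q.corner = orthant x := by
  rw [orthant_eq_of_mem hx, orthant_eq_of_mem q.corner_mem]

lemma orthant_corner_orthant (k : ℤ) (x : Fin n → ℝ) :
    orthant (corner (k, orthant x)) = orthant x := by
  rw [orthant_eq_of_mem (corner_mem (k, orthant x))]
  funext i
  simp only [orthant]
  split_ifs <;> simp_all

end DyadicIndex

lemma DyadicIndex.exists_pairwiseDisjoint_maximal (hn : 0 < n) {S : DyadicIndex n}
    {H : Set (DyadicIndex n)} (hH : ∀ q ∈ H, q.cube ⊆ S.cube) :
    ∃ M : Set (Set (Fin n → ℝ)), M.Countable ∧ M.PairwiseDisjoint id ∧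
      (∀ A ∈ M, ∃ q ∈ H, q.cube = A) ∧ ⋃ q ∈ H, q.cube = ⋃ A ∈ M, A := by
  -- a cube of `H` can only lie in its ancestors of generation between those of `S` and its own
  have hfin : ∀ A ∈ cube '' H, {B ∈ cube '' H | A ⊆ B}.Finite := by
    rintro _ ⟨q, -, rfl⟩
    refine ((Set.finite_Icc S.1 q.1).image fun k => dyadicCube k (dyadicCoord k q.corner)).subset ?_
    rintro _ ⟨⟨p, hp, rfl⟩, hqp⟩
    refine ⟨p.1, ⟨le_of_cube_subset hn (hH p hp), le_of_cube_subset hn hqp⟩, ?_⟩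
    dsimp only
    rw [mem_dyadicCube_iff.1 (hqp q.corner_mem)]
    rfl
  have hnest : ∀ A ∈ cube '' H, ∀ B ∈ cube '' H, A ⊆ B ∨ B ⊆ A ∨ Disjoint A B := by
    rintro _ ⟨p, -, rfl⟩ _ ⟨q, -, rfl⟩
    exact subset_or_subset_or_disjoint p q
  refine ⟨{A | Maximal (· ∈ cube '' H) A}, ((Set.to_countable H).image cube).mono
    fun A hA => hA.prop, Set.pairwise_disjoint_maximal hnest, fun A hA => hA.prop, ?_⟩
  rw [← Set.sUnion_image, Set.sUnion_eq_sUnion_maximal hfin, Set.sUnion_eq_biUnion]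

def heavySubcubes (g : (Fin n → ℝ) → ℝ≥0∞) (c : ℝ≥0∞) (S : DyadicIndex n) : Set (DyadicIndex n) :=
  {q | q.cube ⊆ S.cube ∧ c * ⨍⁻ y in S.cube, g y ∂volume < ⨍⁻ y in q.cube, g y ∂volume}

/-- The localized weak type (1,1) bound for the dyadic maximal function. -/
lemma mul_volume_heavySubcubes_le (hn : 0 < n) (g : (Fin n → ℝ) → ℝ≥0∞) (c : ℝ≥0∞)
    (S : DyadicIndex n) (h0 : ∫⁻ y in S.cube, g y ≠ 0) (htop : ∫⁻ y in S.cube, g y ≠ ⊤) :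
    c * volume (⋃ q ∈ heavySubcubes g c S, q.cube) ≤ volume S.cube := by
  obtain ⟨M, hM, hdisj, hMH, hunion⟩ :=
    DyadicIndex.exists_pairwiseDisjoint_maximal hn (H := heavySubcubes g c S) fun q hq => hq.1
  have hmeas : ∀ A ∈ M, MeasurableSet A := fun A hA => by
    obtain ⟨q, -, rfl⟩ := hMH A hA
    exact q.measurableSet_cube
  set avg := ⨍⁻ y in S.cube, g y ∂volume with havg_def
  rw [setLAverage_eq] at havg_def
  have havg0 : avg ≠ 0 := havg_def ▸ (ENNReal.div_pos h0 S.volume_cube_ne_top).ne'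
  have havgtop : avg ≠ ⊤ := havg_def ▸ ENNReal.div_ne_top htop S.volume_cube_ne_zero
  have hkey : ∀ A ∈ M, avg * c * volume A ≤ ∫⁻ y in A, g y := fun A hA => by
    obtain ⟨q, hq, rfl⟩ := hMH A hA
    refine ENNReal.mul_le_of_le_div ?_
    rw [mul_comm, ← setLAverage_eq]
    exact hq.2.le
  have hsub : (⋃ A ∈ M, A) ⊆ S.cube := Set.iUnion₂_subset fun A hA => by
    obtain ⟨q, hq, rfl⟩ := hMH A hA
    exact hq.1
  refine (ENNReal.mul_le_mul_iff_right havg0 havgtop).1 ?_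
  calc avg * (c * volume (⋃ q ∈ heavySubcubes g c S, q.cube))
      = ∑' A : M, avg * c * volume (A : Set (Fin n → ℝ)) := by
        rw [hunion, ENNReal.tsum_mul_left, ← mul_assoc]
        exact congrArg _ (measure_biUnion (f := id) hM hdisj hmeas)
    _ ≤ ∑' A : M, ∫⁻ y in A, g y := ENNReal.tsum_le_tsum fun A => hkey A A.2
    _ = ∫⁻ y in ⋃ A ∈ M, A, g y := (lintegral_biUnion (s := id) hM hmeas hdisj g).symm
    _ ≤ ∫⁻ y in S.cube, g y := lintegral_mono_set hsub
    _ = avg * volume S.cube := by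
        rw [havg_def, ENNReal.div_mul_cancel S.volume_cube_ne_zero S.volume_cube_ne_top]

def prodAverage (g : Fin m → (Fin n → ℝ) → ℝ≥0∞) (q : DyadicIndex n) : ℝ≥0∞ :=
  ∏ j, ⨍⁻ y in q.cube, g j y ∂volume

lemma setLAverage_cube_le_parent (g : (Fin n → ℝ) → ℝ≥0∞) (q : DyadicIndex n) :
    ⨍⁻ y in q.cube, g y ∂volume ≤ 2 ^ n * ⨍⁻ y in q.parent.cube, g y ∂volume := by
  have h2 : (2 : ℝ≥0∞) ^ n ≠ 0 := pow_ne_zero _ two_ne_zero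
  have h2' : (2 : ℝ≥0∞) ^ n ≠ ⊤ := ENNReal.pow_ne_top ofNat_ne_top
  calc ⨍⁻ y in q.cube, g y ∂volume
      ≤ (∫⁻ y in q.parent.cube, g y) / volume q.cube := by
        rw [setLAverage_eq]
        exact ENNReal.div_le_div_right (lintegral_mono_set q.cube_subset_parent) _
    _ = 2 ^ n * ⨍⁻ y in q.parent.cube, g y ∂volume := by
        rw [← ENNReal.mul_div_mul_left _ _ h2 h2', ← q.volume_parent, mul_div_assoc,
          setLAverage_eq]

lemma prodAverage_le_parent (g : Fin m → (Fin n → ℝ) → ℝ≥0∞) (q : DyadicIndex n) :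
    prodAverage g q ≤ 2 ^ (m * n) * prodAverage g q.parent := by
  calc prodAverage g q ≤ ∏ j, 2 ^ n * ⨍⁻ y in q.parent.cube, g j y ∂volume :=
        Finset.prod_le_prod' fun j _ => setLAverage_cube_le_parent (g j) q
    _ = 2 ^ (m * n) * prodAverage g q.parent := by
        rw [Finset.prod_mul_distrib, Finset.prod_const, Finset.card_univ, Fintype.card_fin,
          ← pow_mul, mul_comm n, prodAverage]

lemma exists_mul_setLAverage_lt {g : Fin m → (Fin n → ℝ) → ℝ≥0∞} {c : ℝ≥0∞}
    {S T : DyadicIndex n} (h : c ^ m * prodAverage g S < prodAverage g T) :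
    ∃ j, c * ⨍⁻ y in S.cube, g j y ∂volume < ⨍⁻ y in T.cube, g j y ∂volume := by
  by_contra! hle
  refine h.not_ge ((Finset.prod_le_prod' fun j _ => hle j).trans_eq ?_)
  rw [Finset.prod_mul_distrib, Finset.prod_const, Finset.card_univ, Fintype.card_fin, prodAverage]

/-- The ratio of consecutive stopping levels: `2^(mn)` absorbs passing to the parent cube, and
`(2m)^m` is the jump placing a stopping cube in the heavy set of the stopping cube above it. -/
def levelBase (m n : ℕ) : ℝ≥0∞ := 2 ^ (m * n) * (2 * m) ^ m

lemma one_lt_levelBase (hm : 0 < m) (hn : 0 < n) : 1 < levelBase m n := by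
  have hm' : (1 : ℝ≥0∞) ≤ 2 * m :=
    one_le_two.trans (le_mul_of_one_le_right zero_le (by exact_mod_cast hm))
  calc (1 : ℝ≥0∞) < 2 ^ (m * n) * 1 := by
        rw [mul_one]; exact one_lt_pow₀ one_lt_two (Nat.mul_ne_zero hm.ne' hn.ne')
    _ ≤ levelBase m n := mul_le_mul_right (one_le_pow₀ hm') _

lemma levelBase_ne_top : levelBase m n ≠ ⊤ := by
  simp [levelBase, ENNReal.mul_eq_top, ENNReal.pow_eq_top_iff]

def IsStoppingCube (g : Fin m → (Fin n → ℝ) → ℝ≥0∞) (q : DyadicIndex n) : Prop :=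
  ∃ ν : ℤ, levelBase m n ^ ν ≤ prodAverage g q ∧
    ∀ p : DyadicIndex n, q.cube ⊂ p.cube → prodAverage g p < levelBase m n ^ ν

lemma IsStoppingCube.prodAverage_ne_zero (hm : 0 < m) (hn : 0 < n)
    {g : Fin m → (Fin n → ℝ) → ℝ≥0∞} {q : DyadicIndex n} (hq : IsStoppingCube g q) :
    prodAverage g q ≠ 0 := by
  obtain ⟨ν, hν, -⟩ := hq
  exact (ENNReal.zpow_pos (one_lt_levelBase hm hn).ne_bot levelBase_ne_top ν).trans_le hν |>.ne'

/-- The levels strictly increase, while passing to the parent costs at most `2^(mn)`. -/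
lemma IsStoppingCube.pow_mul_prodAverage_lt (hm : 0 < m) (hn : 0 < n)
    {g : Fin m → (Fin n → ℝ) → ℝ≥0∞} {S T : DyadicIndex n} (hS : IsStoppingCube g S)
    (hT : IsStoppingCube g T) (hTS : T.cube ⊂ S.cube) :
    (2 * m : ℝ≥0∞) ^ m * prodAverage g S < prodAverage g T := by
  obtain ⟨ν, hSν, hSmax⟩ := hS
  obtain ⟨μ, hTμ, hTmax⟩ := hT
  have hΛ := one_lt_levelBase hm hn
  have hνμ : ν < μ := (ENNReal.monotone_zpow hΛ.le).reflect_lt (hSν.trans_lt (hTmax S hTS))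
  calc (2 * m : ℝ≥0∞) ^ m * prodAverage g S
      ≤ (2 * m) ^ m * (2 ^ (m * n) * prodAverage g S.parent) := by
        gcongr; exact prodAverage_le_parent g S
    _ = levelBase m n * prodAverage g S.parent := by rw [levelBase]; ring
    _ < levelBase m n * levelBase m n ^ ν :=
        (ENNReal.mul_lt_mul_iff_right hΛ.ne_bot levelBase_ne_top).2
          (hSmax _ (S.cube_ssubset_parent hn))
    _ = levelBase m n ^ (ν + 1) := by
        rw [ENNReal.zpow_add hΛ.ne_bot levelBase_ne_top, zpow_one, mul_comm]
    _ ≤ levelBase m n ^ μ := ENNReal.zpow_le_of_le hΛ.le hνμ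
    _ ≤ prodAverage g T := hTμ

def heavySet (g : Fin m → (Fin n → ℝ) → ℝ≥0∞) (S : DyadicIndex n) : Set (Fin n → ℝ) :=
  ⋃ j, ⋃ q ∈ heavySubcubes (g j) (2 * m) S, q.cube

lemma IsStoppingCube.cube_subset_heavySet (hm : 0 < m) (hn : 0 < n)
    {g : Fin m → (Fin n → ℝ) → ℝ≥0∞} {S T : DyadicIndex n} (hS : IsStoppingCube g S)
    (hT : IsStoppingCube g T) (hTS : T.cube ⊂ S.cube) : T.cube ⊆ heavySet g S := by
  obtain ⟨j, hj⟩ := exists_mul_setLAverage_lt (hS.pow_mul_prodAverage_lt hm hn hT hTS)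
  exact Set.subset_iUnion_of_subset j
    (Set.subset_biUnion_of_mem (u := DyadicIndex.cube) ⟨hTS.subset, hj⟩)

lemma IsStoppingCube.two_mul_volume_heavySet_le (hm : 0 < m) (hn : 0 < n)
    {g : Fin m → (Fin n → ℝ) → ℝ≥0∞} (hfin : ∀ j (q : DyadicIndex n), ∫⁻ y in q.cube, g j y ≠ ⊤)
    {S : DyadicIndex n} (hS : IsStoppingCube g S) : 2 * volume (heavySet g S) ≤ volume S.cube := by
  have hint : ∀ j, ∫⁻ y in S.cube, g j y ≠ 0 := fun j h0 => by
    refine hS.prodAverage_ne_zero hm hn (Finset.prod_eq_zero (Finset.mem_univ j) ?_)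
    rw [setLAverage_eq, h0, ENNReal.zero_div]
  have hm0 : (m : ℝ≥0∞) ≠ 0 := by exact_mod_cast hm.ne'
  refine (ENNReal.mul_le_mul_iff_right hm0 (ENNReal.natCast_ne_top m)).1 ?_
  calc (m : ℝ≥0∞) * (2 * volume (heavySet g S))
      ≤ 2 * m * ∑ j, volume (⋃ q ∈ heavySubcubes (g j) (2 * m) S, q.cube) := by
        rw [← mul_assoc, mul_comm (m : ℝ≥0∞)]
        gcongr
        exact measure_iUnion_fintype_le _ _
    _ = ∑ j, 2 * m * volume (⋃ q ∈ heavySubcubes (g j) (2 * m) S, q.cube) := Finset.mul_sum _ _ _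
    _ ≤ ∑ _j : Fin m, volume S.cube :=
        Finset.sum_le_sum fun j _ => mul_volume_heavySubcubes_le hn _ _ S (hint j) (hfin j S)
    _ = m * volume S.cube := by simp

/-- Arbitrarily large cubes `(k, σ)` adjacent to the origin reach a common level, so that no cube
is maximal at that level. -/
def IsExceptionalOrthant (g : Fin m → (Fin n → ℝ) → ℝ≥0∞) (σ : Fin n → ℤ) : Prop :=
  ∃ ν : ℤ, ¬ BddBelow {k : ℤ | levelBase m n ^ ν ≤ prodAverage g (k, σ)}

lemma IsExceptionalOrthant.exists_infinite {g : Fin m → (Fin n → ℝ) → ℝ≥0∞} {σ : Fin n → ℤ}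
    (hσ : IsExceptionalOrthant g σ) (k₁ : ℤ) :
    ∃ ν : ℤ, {k : ℤ | k ≤ k₁ ∧ levelBase m n ^ ν ≤ prodAverage g (k, σ)}.Infinite := by
  obtain ⟨ν, hν⟩ := hσ
  refine ⟨ν, Set.infinite_of_not_bddBelow fun ⟨b, hb⟩ => hν ⟨min b k₁, fun k hk => ?_⟩⟩
  rcases le_or_gt k k₁ with h | h
  · exact (min_le_left _ _).trans (hb ⟨h, hk⟩)
  · exact (min_le_right _ _).trans h.le

/-- `orthant q.corner = q.2` says that `q` is adjacent to the origin. -/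
def sparseFamily (g : Fin m → (Fin n → ℝ) → ℝ≥0∞) : Set (DyadicIndex n) :=
  {q | IsExceptionalOrthant g q.2 ∧ orthant q.corner = q.2} ∪
    {q | IsStoppingCube g q ∧ ¬ IsExceptionalOrthant g (orthant q.corner)}

def sparsePart (𝒮 : Set (DyadicIndex n)) (q : DyadicIndex n) : Set (Fin n → ℝ) :=
  q.cube \ ⋃ p ∈ {p ∈ 𝒮 | p.cube ⊂ q.cube}, p.cube

lemma measurableSet_sparsePart (𝒮 : Set (DyadicIndex n)) (q : DyadicIndex n) :
    MeasurableSet (sparsePart 𝒮 q) :=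
  q.measurableSet_cube.diff (.biUnion (Set.to_countable _) fun p _ => p.measurableSet_cube)

lemma sparsePart_subset (𝒮 : Set (DyadicIndex n)) (q : DyadicIndex n) : sparsePart 𝒮 q ⊆ q.cube :=
  Set.sdiff_subset

lemma pairwiseDisjoint_sparsePart (hn : 0 < n) (𝒮 : Set (DyadicIndex n)) :
    𝒮.PairwiseDisjoint (sparsePart 𝒮) := by
  have key : ∀ p ∈ 𝒮, ∀ q ∈ 𝒮, p ≠ q → p.cube ⊆ q.cube →
      Disjoint (sparsePart 𝒮 p) (sparsePart 𝒮 q) := fun p hp q _ hpq h => by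
    have hssub : p.cube ⊂ q.cube :=
      h.ssubset_of_ne fun he => hpq (DyadicIndex.cube_injective hn he)
    refine Set.disjoint_left.2 fun x hxp hxq => hxq.2 ?_
    exact Set.mem_biUnion (x := p) ⟨hp, hssub⟩ (sparsePart_subset 𝒮 p hxp)
  intro p hp q hq hpq
  rcases DyadicIndex.subset_or_subset_or_disjoint p q with h | h | h
  · exact key p hp q hq hpq h
  · exact (key q hq p hp hpq.symm h).symm
  · exact h.mono (sparsePart_subset 𝒮 p) (sparsePart_subset 𝒮 q)

lemma DyadicIndex.two_mul_volume_cube_le (hn : 0 < n) {p q : DyadicIndex n} (h : p.1 = q.1 + 1) :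
    2 * volume p.cube ≤ volume q.cube := by
  rw [DyadicIndex.volume_cube, DyadicIndex.volume_cube, h]
  conv_lhs => enter [1]; rw [← ENNReal.rpow_one 2]
  rw [← ENNReal.rpow_add _ _ two_ne_zero ofNat_ne_top]
  refine ENNReal.rpow_le_rpow_of_exponent_le one_le_two ?_
  have : (1 : ℝ) ≤ n := by exact_mod_cast hn
  push_cast; nlinarith

lemma two_mul_volume_strictSubcubes_le (hm : 0 < m) (hn : 0 < n)
    {g : Fin m → (Fin n → ℝ) → ℝ≥0∞} (hfin : ∀ j (q : DyadicIndex n), ∫⁻ y in q.cube, g j y ≠ ⊤)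
    {q : DyadicIndex n} (hq : q ∈ sparseFamily g) :
    2 * volume (⋃ p ∈ {p ∈ sparseFamily g | p.cube ⊂ q.cube}, p.cube) ≤ volume q.cube := by
  have horthant : ∀ p : DyadicIndex n, p.cube ⊂ q.cube → orthant p.corner = orthant q.corner :=
    fun p hpq => (DyadicIndex.orthant_corner_eq_of_mem (hpq.subset p.corner_mem)).symm
  rcases hq with ⟨hexc, hq2⟩ | ⟨hstop, hgood⟩
  · -- the selected cubes strictly inside `q` are the smaller cubes adjacent to the origin
    refine le_trans (mul_le_mul_right (measure_mono ?_) 2)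
      (DyadicIndex.two_mul_volume_cube_le hn (p := (q.1 + 1, q.2)) rfl)
    refine Set.iUnion₂_subset fun p ⟨hp, hpq⟩ => ?_
    rcases hp with ⟨-, hp2⟩ | ⟨-, hpgood⟩
    · have hσ : p.2 = orthant q.corner := by rw [← hp2, horthant p hpq]
      change dyadicCube p.1 p.2 ⊆ dyadicCube (q.1 + 1) q.2
      rw [hσ, ← hq2]
      refine dyadicCube_orthant_subset q.corner ?_
      have := DyadicIndex.lt_of_cube_ssubset hn hpq
      omega
    · exact absurd (horthant p hpq ▸ hq2 ▸ hexc) hpgood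
  · refine le_trans (mul_le_mul_right (measure_mono ?_) 2)
      (hstop.two_mul_volume_heavySet_le hm hn hfin)
    refine Set.iUnion₂_subset fun p ⟨hp, hpq⟩ => ?_
    rcases hp with ⟨hpexc, hp2⟩ | ⟨hpstop, -⟩
    · exact absurd (horthant p hpq ▸ hp2.symm ▸ hpexc) hgood
    · exact hstop.cube_subset_heavySet hm hn hpstop hpq

lemma two_inv_mul_volume_le_volume_sparsePart (hm : 0 < m) (hn : 0 < n)
    {g : Fin m → (Fin n → ℝ) → ℝ≥0∞} (hfin : ∀ j (q : DyadicIndex n), ∫⁻ y in q.cube, g j y ≠ ⊤)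
    {q : DyadicIndex n} (hq : q ∈ sparseFamily g) :
    2⁻¹ * volume q.cube ≤ volume (sparsePart (sparseFamily g) q) :=
  two_inv_mul_measure_le_measure_diff q.volume_cube_ne_top
    (two_mul_volume_strictSubcubes_le hm hn hfin hq)

lemma prodAverage_ne_top {g : Fin m → (Fin n → ℝ) → ℝ≥0∞}
    (hfin : ∀ j (q : DyadicIndex n), ∫⁻ y in q.cube, g j y ≠ ⊤) (q : DyadicIndex n) :
    prodAverage g q ≠ ⊤ :=
  ENNReal.prod_ne_top fun j _ => by
    rw [setLAverage_eq]; exact ENNReal.div_ne_top (hfin j q) q.volume_cube_ne_zero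

/-- The cube `(j, dyadicCoord j x)` is the largest ancestor of `(k, dyadicCoord k x)` reaching its
level; it exists since the orthant of `x` is not exceptional. -/
lemma exists_isStoppingCube_ancestor (hm : 0 < m) (hn : 0 < n) {g : Fin m → (Fin n → ℝ) → ℝ≥0∞}
    (hfin : ∀ j (q : DyadicIndex n), ∫⁻ y in q.cube, g j y ≠ ⊤) {x : Fin n → ℝ}
    (hx : ¬ IsExceptionalOrthant g (orthant x)) {k : ℤ}
    (hk : prodAverage g (k, dyadicCoord k x) ≠ 0) :
    ∃ j ≤ k, IsStoppingCube g (j, dyadicCoord j x) ∧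
      prodAverage g (k, dyadicCoord k x) ≤ levelBase m n * prodAverage g (j, dyadicCoord j x) := by
  have hΛ := one_lt_levelBase hm hn
  obtain ⟨ν, hlo, hhi⟩ :=
    ENNReal.exists_mem_Ico_zpow hk (prodAverage_ne_top hfin _) hΛ levelBase_ne_top
  set A := {j : ℤ | j ≤ k ∧ levelBase m n ^ ν ≤ prodAverage g (j, dyadicCoord j x)}
  have hA : BddBelow A := by
    obtain ⟨b, hb⟩ := not_exists_not.1 hx ν
    obtain ⟨k₀, hk₀⟩ := exists_dyadicCoord_eq_orthant x
    refine ⟨min b k₀, fun j ⟨_, hj⟩ => ?_⟩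
    rcases le_or_gt j k₀ with hjk₀ | hjk₀
    · exact (min_le_left _ _).trans (hb (by rwa [hk₀ j hjk₀] at hj))
    · exact (min_le_right _ _).trans hjk₀.le
  have hjA : sInf A ∈ A := Int.csInf_mem ⟨k, le_rfl, hlo⟩ hA
  refine ⟨sInf A, hjA.1, ⟨ν, hjA.2, fun p hp => ?_⟩, ?_⟩
  · by_contra! hpν
    have hp2 : dyadicCoord p.1 x = p.2 :=
      mem_dyadicCube_iff.1 (hp.subset (mem_dyadicCube_dyadicCoord _ x))
    have hlt : p.1 < sInf A := DyadicIndex.lt_of_cube_ssubset hn hp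
    exact hlt.not_ge (csInf_le hA ⟨hlt.le.trans hjA.1, hp2 ▸ hpν⟩)
  · calc prodAverage g (k, dyadicCoord k x) ≤ levelBase m n ^ (ν + 1) := hhi.le
      _ = levelBase m n * levelBase m n ^ ν := by
        rw [ENNReal.zpow_add hΛ.ne_bot levelBase_ne_top, zpow_one, mul_comm]
      _ ≤ levelBase m n * prodAverage g (sInf A, dyadicCoord (sInf A) x) := by gcongr; exact hjA.2

def fracAverage (α : ℝ) (g : Fin m → (Fin n → ℝ) → ℝ≥0∞) (q : DyadicIndex n) : ℝ≥0∞ :=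
  volume q.cube ^ (α / n) * prodAverage g q

lemma DyadicIndex.volume_cube_rpow (hn : 0 < n) (α : ℝ) (q : DyadicIndex n) :
    volume q.cube ^ (α / n) = 2 ^ (-(q.1 : ℝ) * α) := by
  rw [q.volume_cube, ← ENNReal.rpow_mul]
  congr 1
  field_simp

lemma exists_fracAverage_le_geometric (hm : 0 < m) (hn : 0 < n) (α : ℝ)
    {g : Fin m → (Fin n → ℝ) → ℝ≥0∞} (hfin : ∀ j (q : DyadicIndex n), ∫⁻ y in q.cube, g j y ≠ ⊤)
    {x : Fin n → ℝ} (hx : ¬ IsExceptionalOrthant g (orthant x)) (k : ℤ) :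
    ∃ j ≤ k, fracAverage α g (k, dyadicCoord k x) ≤ (2 ^ (-α)) ^ (k - j).toNat *
      (levelBase m n * {j | (j, dyadicCoord j x) ∈ sparseFamily g}.indicator
        (fun j => fracAverage α g (j, dyadicCoord j x)) j) := by
  by_cases hk : prodAverage g (k, dyadicCoord k x) = 0
  · exact ⟨k, le_rfl, by simp [fracAverage, hk]⟩
  obtain ⟨j, hjk, hstop, hle⟩ := exists_isStoppingCube_ancestor hm hn hfin hx hk
  have hsparse : (j, dyadicCoord j x) ∈ sparseFamily g := by
    refine .inr ⟨hstop, ?_⟩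
    rwa [DyadicIndex.orthant_corner_eq_of_mem (mem_dyadicCube_dyadicCoord j x)]
  refine ⟨j, hjk, ?_⟩
  rw [Set.indicator_of_mem (show j ∈ {j | (j, dyadicCoord j x) ∈ sparseFamily g} from hsparse),
    fracAverage, fracAverage, DyadicIndex.volume_cube_rpow hn, DyadicIndex.volume_cube_rpow hn,
    two_rpow_neg_mul_eq hjk]
  calc (2 ^ (-α)) ^ (k - j).toNat * 2 ^ (-(j : ℝ) * α) * prodAverage g (k, dyadicCoord k x)
      ≤ (2 ^ (-α)) ^ (k - j).toNat * 2 ^ (-(j : ℝ) * α) *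
          (levelBase m n * prodAverage g (j, dyadicCoord j x)) := by gcongr
    _ = _ := by ring

def sparseSum (α : ℝ) (g : Fin m → (Fin n → ℝ) → ℝ≥0∞) (x : Fin n → ℝ) : ℝ≥0∞ :=
  ∑' S : sparseFamily g, S.1.cube.indicator (fun _ => fracAverage α g S.1) x

lemma tsum_fracAverage_le_of_not_isExceptionalOrthant (hm : 0 < m) (hn : 0 < n) (α : ℝ)
    {g : Fin m → (Fin n → ℝ) → ℝ≥0∞} (hfin : ∀ j (q : DyadicIndex n), ∫⁻ y in q.cube, g j y ≠ ⊤)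
    {x : Fin n → ℝ} (hx : ¬ IsExceptionalOrthant g (orthant x)) :
    ∑' k : ℤ, fracAverage α g (k, dyadicCoord k x) ≤
      levelBase m n * (1 - 2 ^ (-α))⁻¹ * sparseSum α g x := by
  set B := {j | (j, dyadicCoord j x) ∈ sparseFamily g}
  have hinj : Function.Injective fun j : B => (⟨(j, dyadicCoord j x), j.2⟩ : sparseFamily g) :=
    fun i j hij => Subtype.ext (congrArg (fun S : sparseFamily g => S.1.1) hij)
  calc ∑' k : ℤ, fracAverage α g (k, dyadicCoord k x)
      ≤ (1 - 2 ^ (-α))⁻¹ * ∑' j, levelBase m n *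
          B.indicator (fun j => fracAverage α g (j, dyadicCoord j x)) j :=
        tsum_le_of_forall_le_geometric (exists_fracAverage_le_geometric hm hn α hfin hx)
    _ = levelBase m n * (1 - 2 ^ (-α))⁻¹ * ∑' j : B, fracAverage α g (j, dyadicCoord j x) := by
        rw [ENNReal.tsum_mul_left, ← tsum_subtype]; ring
    _ ≤ levelBase m n * (1 - 2 ^ (-α))⁻¹ * sparseSum α g x := by
        gcongr
        refine le_of_eq_of_le (tsum_congr fun j => ?_) (ENNReal.tsum_comp_le_tsum_of_injective hinj
          fun S : sparseFamily g => S.1.cube.indicator (fun _ => fracAverage α g S.1) x)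
        exact (Set.indicator_of_mem (mem_dyadicCube_dyadicCoord j x)
          fun _ => fracAverage α g (j, dyadicCoord j x)).symm

lemma sparseSum_eq_top_of_isExceptionalOrthant (hm : 0 < m) (hn : 0 < n) {α : ℝ} (hα : 0 ≤ α)
    {g : Fin m → (Fin n → ℝ) → ℝ≥0∞} {x : Fin n → ℝ} (hx : IsExceptionalOrthant g (orthant x)) :
    sparseSum α g x = ⊤ := by
  obtain ⟨k₀, hk₀⟩ := exists_dyadicCoord_eq_orthant x
  obtain ⟨ν, hJ⟩ := hx.exists_infinite (min k₀ 0)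
  set J := {k : ℤ | k ≤ min k₀ 0 ∧ levelBase m n ^ ν ≤ prodAverage g (k, orthant x)}
  have : Infinite J := hJ.to_subtype
  have hmem : ∀ k : J, ((k : ℤ), orthant x) ∈ sparseFamily g :=
    fun k => .inl ⟨hx, DyadicIndex.orthant_corner_orthant k x⟩
  have hinj : Function.Injective fun k : J => (⟨((k : ℤ), orthant x), hmem k⟩ : sparseFamily g) :=
    fun i j hij => Subtype.ext (congrArg (fun S : sparseFamily g => S.1.1) hij)
  have hterm : ∀ k : J, levelBase m n ^ ν ≤ fracAverage α g ((k : ℤ), orthant x) := by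
    rintro ⟨k, hk, hkν⟩
    rw [fracAverage, DyadicIndex.volume_cube_rpow hn]
    refine le_mul_of_one_le_of_le ?_ hkν
    refine le_of_eq_of_le ENNReal.rpow_zero.symm (ENNReal.rpow_le_rpow_of_exponent_le one_le_two ?_)
    have : (k : ℝ) ≤ 0 := by exact_mod_cast hk.trans (min_le_right _ _)
    nlinarith
  refine top_le_iff.1 ?_
  calc ⊤ = ∑' _ : J, levelBase m n ^ ν := (ENNReal.tsum_const_eq_top_of_ne_zero
        (ENNReal.zpow_pos (one_lt_levelBase hm hn).ne_bot levelBase_ne_top ν).ne').symm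
    _ ≤ ∑' k : J, (DyadicIndex.cube ((k : ℤ), orthant x)).indicator
          (fun _ => fracAverage α g ((k : ℤ), orthant x)) x := by
        refine ENNReal.tsum_le_tsum fun k => ?_
        have hxk : x ∈ DyadicIndex.cube ((k : ℤ), orthant x) := by
          rw [← hk₀ k (k.2.1.trans (min_le_left _ _))]
          exact mem_dyadicCube_dyadicCoord _ x
        rw [Set.indicator_of_mem hxk]
        exact hterm k
    _ ≤ sparseSum α g x := ENNReal.tsum_comp_le_tsum_of_injective hinj
          fun S : sparseFamily g => S.1.cube.indicator (fun _ => fracAverage α g S.1) x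

theorem tsum_fracAverage_le_sparseSum (hm : 0 < m) (hn : 0 < n) {α : ℝ} (hα : 0 ≤ α)
    {g : Fin m → (Fin n → ℝ) → ℝ≥0∞} (hfin : ∀ j (q : DyadicIndex n), ∫⁻ y in q.cube, g j y ≠ ⊤)
    (x : Fin n → ℝ) :
    ∑' k : ℤ, fracAverage α g (k, dyadicCoord k x) ≤
      levelBase m n * (1 - 2 ^ (-α))⁻¹ * sparseSum α g x := by
  by_cases hx : IsExceptionalOrthant g (orthant x)
  · rw [sparseSum_eq_top_of_isExceptionalOrthant hm hn hα hx, ENNReal.mul_top]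
    · exact le_top
    · refine mul_ne_zero (one_lt_levelBase hm hn).ne_bot (ENNReal.inv_ne_zero.2 ?_)
      exact ENNReal.sub_ne_top ENNReal.one_ne_top
  · exact tsum_fracAverage_le_of_not_isExceptionalOrthant hm hn α hfin hx

lemma ofReal_rpow_mul_prod_lintegral (hn : 0 < n) (α : ℝ) (g : Fin m → (Fin n → ℝ) → ℝ≥0∞)
    (q : DyadicIndex n) :
    ENNReal.ofReal ((2 : ℝ) ^ (-q.1)) ^ (α - m * n) * ∏ j, ∫⁻ y in q.cube, g j y =
      fracAverage α g q := by
  simp only [fracAverage, prodAverage, setLAverage_eq, div_eq_mul_inv, Finset.prod_mul_distrib,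
    Finset.prod_const, Finset.card_univ, Fintype.card_fin, q.volume_cube, ofReal_two_zpow,
    ← ENNReal.rpow_mul, ← ENNReal.rpow_neg, ← ENNReal.rpow_natCast]
  conv_rhs => rw [mul_left_comm, ← ENNReal.rpow_add _ _ two_ne_zero ofNat_ne_top, mul_comm]
  congr 2
  field_simp
  ring

lemma dyadicFracIntegral_eq_tsum (hn : 0 < n) (α : ℝ) (f : Fin m → (Fin n → ℝ) → ℝ)
    (x : Fin n → ℝ) :
    dyadicFracIntegral α f x =
      ∑' k : ℤ, fracAverage α (fun j y => ENNReal.ofReal |f j y|) (k, dyadicCoord k x) := by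
  rw [dyadicFracIntegral, ENNReal.tsum_prod (f := fun k v => (dyadicCube k v).indicator
    (fun _ => ENNReal.ofReal ((2 : ℝ) ^ (-k)) ^ (α - m * n) *
      ∏ j, ∫⁻ y in dyadicCube k v, ENNReal.ofReal |f j y|) x)]
  refine tsum_congr fun k => ?_
  rw [tsum_eq_single (dyadicCoord k x) fun v hv =>
      Set.indicator_of_notMem (fun hx => hv (mem_dyadicCube_iff.1 hx).symm) _,
    Set.indicator_of_mem (mem_dyadicCube_dyadicCoord k x)]
  exact ofReal_rpow_mul_prod_lintegral hn α _ (k, dyadicCoord k x)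

lemma DyadicIndex.lintegral_ofReal_ne_top {f : (Fin n → ℝ) → ℝ} (hf : LocallyIntegrable f volume)
    (q : DyadicIndex n) : ∫⁻ y in q.cube, ENNReal.ofReal (f y) ≠ ⊤ := by
  have hbox : q.cube ⊆ Set.univ.pi fun i => Set.Icc (q.corner i) (q.corner i + 2 ^ (-q.1)) := by
    rw [DyadicIndex.cube, dyadicCube, cube_eq_pi]
    exact Set.pi_mono fun i _ => Set.Ico_subset_Icc_self
  exact ((hf.integrableOn_isCompact (isCompact_univ_pi fun i => isCompact_Icc)).mono_set
    hbox).lintegral_lt_top.ne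

end DyadicSparse

open DyadicSparse

theorem statement4_general (hn : 0 < n) (m : ℕ) (hm : 0 < m) (α : ℝ)
    (hα0 : 0 < α) :
    ∃ (η : ℝ) (C : ℝ≥0∞), 0 < η ∧ η < 1 ∧ 0 < C ∧ C < ∞ ∧
      ∀ f : Fin m → (Fin n → ℝ) → ℝ,
        (∀ j x, 0 ≤ f j x) → (∀ j, LocallyIntegrable (f j) volume) →
        ∃ (𝒮 : Set (ℤ × (Fin n → ℤ))) (E : ℤ × (Fin n → ℤ) → Set (Fin n → ℝ)),
          (∀ S ∈ 𝒮, MeasurableSet (E S) ∧ E S ⊆ dyadicCube S.1 S.2 ∧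
            ENNReal.ofReal η * volume (dyadicCube S.1 S.2) ≤ volume (E S)) ∧
          𝒮.PairwiseDisjoint E ∧
          ∀ x : Fin n → ℝ,
            dyadicFracIntegral α f x ≤
              C * ∑' S : 𝒮,
                (dyadicCube S.1.1 S.1.2).indicator
                  (fun _ => volume (dyadicCube S.1.1 S.1.2) ^ (α / (n : ℝ)) *
                    ∏ j, (volume (dyadicCube S.1.1 S.1.2))⁻¹ *
                      ∫⁻ y in dyadicCube S.1.1 S.1.2, ENNReal.ofReal (f j y)) x := by
  have hr : (2 : ℝ≥0∞) ^ (-α) < 1 :=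
    ENNReal.rpow_lt_one_of_one_lt_of_neg one_lt_two (neg_neg_of_pos hα0)
  refine ⟨1 / 2, levelBase m n * (1 - 2 ^ (-α))⁻¹, by norm_num, by norm_num,
    ENNReal.mul_pos (one_lt_levelBase hm hn).ne_bot (ENNReal.inv_ne_zero.2 (by simp)),
    ENNReal.mul_lt_top levelBase_ne_top.lt_top (ENNReal.inv_lt_top.2 (tsub_pos_of_lt hr)),
    fun f hf0 hf => ?_⟩
  set g : Fin m → (Fin n → ℝ) → ℝ≥0∞ := fun j y => ENNReal.ofReal (f j y)
  have hfin : ∀ j (q : DyadicIndex n), ∫⁻ y in q.cube, g j y ≠ ⊤ :=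
    fun j q => q.lintegral_ofReal_ne_top (hf j)
  refine ⟨sparseFamily g, sparsePart (sparseFamily g), fun S hS => ⟨measurableSet_sparsePart _ S,
    sparsePart_subset _ S, ?_⟩, pairwiseDisjoint_sparsePart hn _, fun x => ?_⟩
  · rw [one_div, ENNReal.ofReal_inv_of_pos two_pos, ENNReal.ofReal_ofNat]
    exact two_inv_mul_volume_le_volume_sparsePart hm hn hfin hS
  · have hg : (fun j y => ENNReal.ofReal |f j y|) = g := by simp [g, abs_of_nonneg (hf0 _ _)]
    rw [dyadicFracIntegral_eq_tsum hn, hg]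
    refine (tsum_fracAverage_le_sparseSum hm hn hα0.le hfin x).trans_eq ?_
    simp only [sparseSum, fracAverage, prodAverage, setLAverage_eq, ENNReal.div_eq_inv_mul]
    rfl

theorem statement4 (hn : 0 < n) (m : ℕ) (hm : 0 < m) (α : ℝ)
    (hα0 : 0 < α) (hα : α < (m : ℝ) * n) :
    ∃ (η : ℝ) (C : ℝ≥0∞), 0 < η ∧ η < 1 ∧ 0 < C ∧ C < ∞ ∧
      ∀ f : Fin m → (Fin n → ℝ) → ℝ,
        (∀ j x, 0 ≤ f j x) → (∀ j, LocallyIntegrable (f j) volume) →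
        ∃ (𝒮 : Set (ℤ × (Fin n → ℤ))) (E : ℤ × (Fin n → ℤ) → Set (Fin n → ℝ)),
          (∀ S ∈ 𝒮, MeasurableSet (E S) ∧ E S ⊆ dyadicCube S.1 S.2 ∧
            ENNReal.ofReal η * volume (dyadicCube S.1 S.2) ≤ volume (E S)) ∧
          𝒮.PairwiseDisjoint E ∧
          ∀ x : Fin n → ℝ,
            dyadicFracIntegral α f x ≤
              C * ∑' S : 𝒮,
                (dyadicCube S.1.1 S.1.2).indicator
                  (fun _ => volume (dyadicCube S.1.1 S.1.2) ^ (α / (n : ℝ)) *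
                    ∏ j, (volume (dyadicCube S.1.1 S.1.2))⁻¹ *
                      ∫⁻ y in dyadicCube S.1.1 S.1.2, ENNReal.ofReal (f j y)) x :=
  statement4_general hn m hm α hα0
end
end

section
/- (Local sparse estimate for the maximal part) Let μ be a nonnegative Radon measure on ℝⁿ with ‖μ‖_{n−αp} < ∞, p_j ∈ (1,∞), 1/p = ∑ 1/p_j, 0 < α < mn, p > 0. Let S ⊆ D be an η-sparse family and Q₀ ∈ D. Then ∫_{Q₀} ( ∑_{S ∈ S, S ⊆ Q₀} |S|^{α/n} ∏_j (|S|^{-1} ∫_S |f_j|) 1_{E_S(S)} )^p dμ ≲ η^{-1} ‖μ‖_{n−αp} ∏_{j=1}^m ‖f_j‖_{L^{p_j}(Q₀)}^p. -/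
open MeasureTheory ENNReal

noncomputable section

variable {n : ℕ}

/-!
Because the sets `E(S)` are pairwise disjoint, the `p`-th power of the sum is the sum of the
`p`-th powers, and the cube `S` contributes at most
`‖μ‖ ℓ_S^{n-αp} c_S^p = ‖μ‖ ∏_j (|S| ⟨f_j⟩_S^{p_j})^{p/p_j}`. Hölder's inequality for sums with
weights `p/p_j` then reduces everything to the sparse Carleson embedding
`∑_S |S| ⟨g⟩_S^q ≤ η⁻¹ C_q ∫_{Q₀} g^q`. That comes from `|S| ≤ η⁻¹ |E(S)|` and `⟨g⟩_S ≤ M g` on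
`E(S)`, where `M` is the dyadic maximal function localised to `Q₀`, together with the `L^q` bound
for `M`. This bound follows from the weak type (1,1) estimate (the maximal dyadic cubes are
disjoint) by a dyadic layer-cake decomposition.
-/

section Summation

theorem tsum_indicator_rpow_of_pairwise_disjoint {ι α : Type*} {E : ι → Set α}
    (hE : Pairwise (Function.onFun Disjoint E)) (c : ι → ℝ≥0∞) {p : ℝ} (hp : 0 < p) (x : α) :
    (∑' i, (E i).indicator (fun _ => c i) x) ^ p = ∑' i, (E i).indicator (fun _ => c i ^ p) x := by
  by_cases hx : ∃ i, x ∈ E i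
  · obtain ⟨i, hi⟩ := hx
    have hnot : ∀ j ≠ i, x ∉ E j := fun j hj hxj => Set.disjoint_left.1 (hE hj) hxj hi
    rw [tsum_eq_single i fun j hj => Set.indicator_of_notMem (hnot j hj) _,
      tsum_eq_single i fun j hj => Set.indicator_of_notMem (hnot j hj) _,
      Set.indicator_of_mem hi, Set.indicator_of_mem hi]
  · rw [not_exists] at hx
    simp [Set.indicator_of_notMem (hx _), ENNReal.zero_rpow_of_pos hp]

theorem setLIntegral_rpow_tsum_indicator_le {ι α : Type*} [Countable ι] [MeasurableSpace α]
    (μ : Measure α) (s : Set α) {E : ι → Set α} (hEm : ∀ i, MeasurableSet (E i))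
    (hE : Pairwise (Function.onFun Disjoint E)) (c : ι → ℝ≥0∞) {p : ℝ} (hp : 0 < p) :
    ∫⁻ x in s, (∑' i, (E i).indicator (fun _ => c i) x) ^ p ∂μ ≤ ∑' i, c i ^ p * μ (E i) := by
  simp_rw [tsum_indicator_rpow_of_pairwise_disjoint hE c hp]
  refine (setLIntegral_le_lintegral _ _).trans_eq ?_
  rw [lintegral_tsum fun i => (measurable_const.indicator (hEm i)).aemeasurable]
  simp_rw [lintegral_indicator_const (hEm _)]

theorem tsum_prod_rpow_le_prod_tsum_rpow {ι σ : Type*} [Countable σ] (s : Finset ι)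
    (F : ι → σ → ℝ≥0∞) {t : ι → ℝ} (ht : ∑ j ∈ s, t j = 1) (ht0 : ∀ j ∈ s, 0 ≤ t j) :
    ∑' x, ∏ j ∈ s, F j x ^ t j ≤ ∏ j ∈ s, (∑' x, F j x) ^ t j := by
  let _ : MeasurableSpace σ := ⊤
  have : MeasurableSingletonClass σ := ⟨fun _ => trivial⟩
  simpa only [lintegral_count] using ENNReal.lintegral_prod_norm_pow_le (μ := Measure.count) s
    (fun j _ => (measurable_of_countable (F j)).aemeasurable) ht ht0

theorem prod_rpow_eq_rpow_sum {ι : Type*} (s : Finset ι) {x : ℝ≥0∞} (hx0 : x ≠ 0) (hx : x ≠ ∞)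
    (t : ι → ℝ) : ∏ j ∈ s, x ^ t j = x ^ ∑ j ∈ s, t j := by
  classical
  induction s using Finset.induction_on with
  | empty => simp
  | insert j s hj ih =>
    rw [Finset.prod_insert hj, Finset.sum_insert hj, ih, ENNReal.rpow_add _ _ hx0 hx]

theorem prod_mul_rpow_eq_mul_prod_rpow {ι : Type*} (s : Finset ι) {x : ℝ≥0∞} (hx0 : x ≠ 0)
    (hx : x ≠ ∞) (y : ι → ℝ≥0∞) {t : ι → ℝ} (ht0 : ∀ j ∈ s, 0 ≤ t j) (ht : ∑ j ∈ s, t j = 1) :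
    ∏ j ∈ s, (x * y j) ^ t j = x * ∏ j ∈ s, y j ^ t j := by
  rw [Finset.prod_congr rfl fun j hj => ENNReal.mul_rpow_of_nonneg _ _ (ht0 j hj),
    Finset.prod_mul_distrib, prod_rpow_eq_rpow_sum s hx0 hx, ht, ENNReal.rpow_one]

theorem rpow_mul_prod_mul_rpow_eq_prod {ι : Type*} (s : Finset ι) {v : ℝ≥0∞} (hv0 : v ≠ 0)
    (hv : v ≠ ∞) (a : ι → ℝ≥0∞) {γ p : ℝ} {P : ι → ℝ} (hp : 0 ≤ p) (hP : ∀ j ∈ s, 0 < P j)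
    (hsum : ∑ j ∈ s, p / P j = 1) :
    (v ^ γ * ∏ j ∈ s, a j) ^ p * v ^ (1 - γ * p) = ∏ j ∈ s, (v * a j ^ P j) ^ (p / P j) := by
  have hpow : ∀ j ∈ s, (a j ^ P j) ^ (p / P j) = a j ^ p := fun j hj => by
    rw [← ENNReal.rpow_mul, mul_div_cancel₀ _ (hP j hj).ne']
  rw [prod_mul_rpow_eq_mul_prod_rpow s hv0 hv _ (fun j hj => div_nonneg hp (hP j hj).le) hsum,
    Finset.prod_congr rfl hpow,
    ENNReal.mul_rpow_of_nonneg _ _ hp, ← ENNReal.rpow_mul, ENNReal.prod_rpow_of_nonneg hp,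
    mul_right_comm, ← ENNReal.rpow_add _ _ hv0 hv, add_sub_cancel, ENNReal.rpow_one]

end Summation

section DyadicLayers

theorem rpow_le_tsum_ite_two_zpow_lt {q : ℝ} (hq : 0 < q) (F : ℝ≥0∞) :
    F ^ q ≤ ∑' k : ℤ, if (2 : ℝ≥0∞) ^ (k + 1) < F then (2 : ℝ≥0∞) ^ ((k + 2 : ℝ) * q) else 0 := by
  rcases eq_or_ne F 0 with rfl | hF0
  · simp [ENNReal.zero_rpow_of_pos hq]
  rcases eq_or_ne F ∞ with rfl | hFtop
  · rw [ENNReal.top_rpow_of_pos hq]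
    refine top_le_iff.2 (eq_top_mono ?_ (ENNReal.tsum_const_eq_top_of_ne_zero (α := ℕ) one_ne_zero))
    refine (ENNReal.tsum_le_tsum fun i : ℕ => ?_).trans
      (ENNReal.tsum_comp_le_tsum_of_injective Nat.cast_injective _)
    rw [if_pos (ENNReal.zpow_lt_top two_ne_zero ENNReal.ofNat_ne_top _)]
    exact ENNReal.one_le_rpow one_le_two (by positivity)
  obtain ⟨K, hK, hFK⟩ := ENNReal.exists_mem_Ioc_zpow hF0 hFtop one_lt_two ENNReal.ofNat_ne_top
  refine le_trans ?_ (ENNReal.le_tsum (K - 1))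
  rw [sub_add_cancel, if_pos hK]
  refine (ENNReal.rpow_le_rpow hFK hq.le).trans_eq ?_
  rw [← ENNReal.rpow_intCast, ← ENNReal.rpow_mul]
  push_cast
  ring_nf

theorem lintegral_rpow_le_tsum_measure {α : Type*} [MeasurableSpace α] (μ : Measure α)
    {F : α → ℝ≥0∞} (hF : Measurable F) {q : ℝ} (hq : 0 < q) :
    ∫⁻ x, F x ^ q ∂μ ≤
      ∑' k : ℤ, (2 : ℝ≥0∞) ^ ((k + 2 : ℝ) * q) * μ {x | (2 : ℝ≥0∞) ^ (k + 1) < F x} := by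
  have hlevel : ∀ (k : ℤ) (x : α), (if (2 : ℝ≥0∞) ^ (k + 1) < F x then
      (2 : ℝ≥0∞) ^ ((k + 2 : ℝ) * q) else 0) =
      {x | (2 : ℝ≥0∞) ^ (k + 1) < F x}.indicator (fun _ => (2 : ℝ≥0∞) ^ ((k + 2 : ℝ) * q)) x := by
    intro k x; simp [Set.indicator_apply]
  have hmeas : ∀ k : ℤ, MeasurableSet {x | (2 : ℝ≥0∞) ^ (k + 1) < F x} :=
    fun _ => measurableSet_lt measurable_const hF
  calc ∫⁻ x, F x ^ q ∂μ
      ≤ ∫⁻ x, ∑' k : ℤ, (if (2 : ℝ≥0∞) ^ (k + 1) < F x then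
          (2 : ℝ≥0∞) ^ ((k + 2 : ℝ) * q) else 0) ∂μ :=
        lintegral_mono fun x => rpow_le_tsum_ite_two_zpow_lt hq (F x)
    _ = ∑' k : ℤ, (2 : ℝ≥0∞) ^ ((k + 2 : ℝ) * q) * μ {x | (2 : ℝ≥0∞) ^ (k + 1) < F x} := by
      simp_rw [hlevel]
      rw [lintegral_tsum fun k => (measurable_const.indicator (hmeas k)).aemeasurable]
      simp_rw [lintegral_indicator_const (hmeas _)]

theorem tsum_ite_two_zpow_lt_le {θ : ℝ} (hθ : 0 < θ) (G : ℝ≥0∞) :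
    ∑' k : ℤ, (if (2 : ℝ≥0∞) ^ k < G then (2 : ℝ≥0∞) ^ ((k : ℝ) * θ) else 0) ≤
      (1 - 2 ^ (-θ))⁻¹ * G ^ θ := by
  rcases eq_or_ne G 0 with rfl | hG0
  · simp
  rcases eq_or_ne G ∞ with rfl | hGtop
  · rw [ENNReal.top_rpow_of_pos hθ, ENNReal.mul_top (ENNReal.inv_ne_zero.2 (by simp))]
    exact le_top
  obtain ⟨K, hK, hGK⟩ := ENNReal.exists_mem_Ioc_zpow hG0 hGtop one_lt_two ENNReal.ofNat_ne_top
  set f : ℤ → ℝ≥0∞ := fun k => if (2 : ℝ≥0∞) ^ k < G then (2 : ℝ≥0∞) ^ ((k : ℝ) * θ) else 0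
  have hsupp : Function.support f ⊆ Set.range fun i : ℕ => K - i := by
    intro k hk
    have hkK : k ≤ K := by
      by_contra! hKk
      refine hk (if_neg fun hkG => (hkG.trans_le hGK).not_ge ?_)
      exact ENNReal.zpow_le_of_le one_le_two (by omega)
    exact ⟨(K - k).toNat, show K - ((K - k).toNat : ℤ) = k by omega⟩
  have hterm : ∀ i : ℕ, f (K - i) ≤ (2 : ℝ≥0∞) ^ ((K : ℝ) * θ) * (2 ^ (-θ)) ^ i := by
    intro i
    refine (ite_le_sup _ _ _).trans (sup_le (le_of_eq ?_) zero_le)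
    rw [← ENNReal.rpow_natCast, ← ENNReal.rpow_mul,
      ← ENNReal.rpow_add _ _ two_ne_zero ENNReal.ofNat_ne_top]
    push_cast
    ring_nf
  calc ∑' k, f k = ∑' i : ℕ, f (K - i) :=
        (Function.Injective.tsum_eq (fun i j h => by simpa using h) hsupp).symm
    _ ≤ ∑' i : ℕ, (2 : ℝ≥0∞) ^ ((K : ℝ) * θ) * (2 ^ (-θ)) ^ i := ENNReal.tsum_le_tsum hterm
    _ = (1 - 2 ^ (-θ))⁻¹ * (2 ^ K) ^ θ := by
      rw [ENNReal.tsum_mul_left, ENNReal.tsum_geometric, mul_comm, ← ENNReal.rpow_intCast,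
        ← ENNReal.rpow_mul]
    _ ≤ (1 - 2 ^ (-θ))⁻¹ * G ^ θ := by gcongr

/-- `2^{2q}` comes from the dyadic layer-cake, `(1 - 2^{1-q})⁻¹` from the geometric series. -/
def dyadicMaximalConst (q : ℝ) : ℝ≥0∞ := 2 ^ (2 * q) * (1 - 2 ^ (1 - q))⁻¹

theorem dyadicMaximalConst_ne_zero (q : ℝ) : dyadicMaximalConst q ≠ 0 :=
  mul_ne_zero (ENNReal.rpow_pos two_pos ENNReal.ofNat_ne_top).ne' (ENNReal.inv_ne_zero.2 (by simp))

theorem dyadicMaximalConst_lt_top {q : ℝ} (hq : 1 < q) : dyadicMaximalConst q < ∞ := by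
  refine ENNReal.mul_lt_top (ENNReal.rpow_lt_top_of_nonneg (by linarith) ENNReal.ofNat_ne_top) ?_
  rw [ENNReal.inv_lt_top, tsub_pos_iff_lt]
  exact ENNReal.rpow_lt_one_of_one_lt_of_neg one_lt_two (by linarith)

theorem tsum_ite_two_zpow_lt_mul_le {q : ℝ} (hq : 1 < q) (G : ℝ≥0∞) :
    ∑' k : ℤ, (if (2 : ℝ≥0∞) ^ k < G then
      (2 : ℝ≥0∞) ^ ((k + 2 : ℝ) * q) * ((2 : ℝ≥0∞) ^ k)⁻¹ * G else 0) ≤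
      dyadicMaximalConst q * G ^ q := by
  have hweight : ∀ k : ℤ, (2 : ℝ≥0∞) ^ ((k + 2 : ℝ) * q) * ((2 : ℝ≥0∞) ^ k)⁻¹ =
      2 ^ (2 * q) * 2 ^ ((k : ℝ) * (q - 1)) := by
    intro k
    rw [← ENNReal.rpow_intCast, ← ENNReal.rpow_neg,
      ← ENNReal.rpow_add _ _ two_ne_zero ENNReal.ofNat_ne_top,
      ← ENNReal.rpow_add _ _ two_ne_zero ENNReal.ofNat_ne_top]
    ring_nf
  have hterm : ∀ k : ℤ, (if (2 : ℝ≥0∞) ^ k < G then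
      (2 : ℝ≥0∞) ^ ((k + 2 : ℝ) * q) * ((2 : ℝ≥0∞) ^ k)⁻¹ * G else 0) =
      G * 2 ^ (2 * q) * (if (2 : ℝ≥0∞) ^ k < G then (2 : ℝ≥0∞) ^ ((k : ℝ) * (q - 1)) else 0) := by
    intro k
    split_ifs
    · rw [hweight]; ring
    · rw [mul_zero]
  calc _ = G * 2 ^ (2 * q) *
        ∑' k : ℤ, (if (2 : ℝ≥0∞) ^ k < G then (2 : ℝ≥0∞) ^ ((k : ℝ) * (q - 1)) else 0) := by
        simp_rw [hterm, ENNReal.tsum_mul_left]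
    _ ≤ G * 2 ^ (2 * q) * ((1 - 2 ^ (-(q - 1)))⁻¹ * G ^ (q - 1)) := by
        gcongr; exact tsum_ite_two_zpow_lt_le (by linarith) G
    _ = dyadicMaximalConst q * G ^ q := by
        rw [dyadicMaximalConst, neg_sub, show G ^ q = G * G ^ (q - 1) by
          simpa using ENNReal.rpow_add_of_nonneg (x := G) 1 (q - 1) zero_le_one (by linarith)]
        ring

end DyadicLayers

section DyadicGeometry

def dyadicIndex (k : ℤ) (x : Fin n → ℝ) : Fin n → ℤ := fun i => ⌊x i * 2 ^ k⌋

theorem mem_dyadicCube_iff {k : ℤ} {mv : Fin n → ℤ} {x : Fin n → ℝ} :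
    x ∈ dyadicCube k mv ↔ dyadicIndex k x = mv := by
  have h2 : (0 : ℝ) < 2 ^ k := zpow_pos two_pos _
  simp only [dyadicCube, cube, Set.mem_ofPred_eq, funext_iff, dyadicIndex, Int.floor_eq_iff]
  refine forall_congr' fun i => and_congr ?_ ?_
  · rw [zpow_neg, ← div_eq_mul_inv, div_le_iff₀ h2]
  · rw [zpow_neg, ← add_one_mul, ← div_eq_mul_inv, lt_div_iff₀ h2]

theorem dyadicIndex_eq_div_of_le {k k' : ℤ} (hk : k ≤ k') (x : Fin n → ℝ) (i : Fin n) :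
    dyadicIndex k x i = dyadicIndex k' x i / 2 ^ (k' - k).toNat := by
  have hpow : (2 : ℝ) ^ k' = 2 ^ k * ((2 ^ (k' - k).toNat : ℕ) : ℝ) := by
    rw [Nat.cast_pow, Nat.cast_ofNat, ← zpow_natCast, Int.toNat_of_nonneg (sub_nonneg.2 hk),
      ← zpow_add₀ two_ne_zero, add_sub_cancel]
  have hx : x i * 2 ^ k = x i * 2 ^ k' / ((2 ^ (k' - k).toNat : ℕ) : ℝ) := by
    rw [hpow, ← mul_assoc, mul_div_cancel_right₀ _ (by positivity)]
  rw [dyadicIndex, hx, Int.floor_div_natCast, Nat.cast_pow, Nat.cast_ofNat]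
  rfl

theorem dyadicCube_subset_of_le {k k' : ℤ} {mv mv' : Fin n → ℤ} (hk : k ≤ k')
    (h : (dyadicCube k mv ∩ dyadicCube k' mv').Nonempty) :
    dyadicCube k' mv' ⊆ dyadicCube k mv := by
  obtain ⟨x, hx, hx'⟩ := h
  intro y hy
  rw [mem_dyadicCube_iff] at hx hx' hy ⊢
  ext i
  rw [dyadicIndex_eq_div_of_le hk, ← hx, dyadicIndex_eq_div_of_le hk, hy, hx']

theorem eq_of_dyadicCube_inter_nonempty {k : ℤ} {mv mv' : Fin n → ℤ}
    (h : (dyadicCube k mv ∩ dyadicCube k mv').Nonempty) : mv = mv' := by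
  obtain ⟨x, hx, hx'⟩ := h
  rw [mem_dyadicCube_iff] at hx hx'
  rw [← hx, hx']

theorem dyadicCube_nonempty (k : ℤ) (mv : Fin n → ℤ) : (dyadicCube k mv).Nonempty :=
  ⟨fun i => mv i * 2 ^ (-k), fun _ => ⟨le_rfl, lt_add_of_pos_right _ (zpow_pos two_pos _)⟩⟩

theorem dyadicCube_eq_pi (k : ℤ) (mv : Fin n → ℤ) :
    dyadicCube k mv =
      Set.univ.pi fun i => Set.Ico (mv i * 2 ^ (-k) : ℝ) (mv i * 2 ^ (-k) + 2 ^ (-k)) := by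
  ext x; simp [dyadicCube, cube, Set.mem_pi]

theorem measurableSet_dyadicCube (k : ℤ) (mv : Fin n → ℤ) : MeasurableSet (dyadicCube k mv) := by
  rw [dyadicCube_eq_pi]
  exact .univ_pi fun _ => measurableSet_Ico

theorem volume_dyadicCube (k : ℤ) (mv : Fin n → ℤ) :
    volume (dyadicCube k mv) = ENNReal.ofReal (2 ^ (-k)) ^ n := by
  simp [dyadicCube_eq_pi, volume_pi_pi, Real.volume_Ico]

theorem volume_dyadicCube_ne_zero (k : ℤ) (mv : Fin n → ℤ) : volume (dyadicCube k mv) ≠ 0 := by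
  rw [volume_dyadicCube]
  exact pow_ne_zero _ (ENNReal.ofReal_pos.2 (zpow_pos two_pos _)).ne'

theorem volume_dyadicCube_ne_top (k : ℤ) (mv : Fin n → ℤ) : volume (dyadicCube k mv) ≠ ∞ := by
  simp [volume_dyadicCube]

theorem le_of_dyadicCube_subset (hn : 0 < n) {k k' : ℤ} {mv mv' : Fin n → ℤ}
    (h : dyadicCube k mv ⊆ dyadicCube k' mv') : k' ≤ k := by
  by_contra! hlt
  have hv := measure_mono (μ := volume) h
  rw [volume_dyadicCube, volume_dyadicCube] at hv
  refine hv.not_gt (ENNReal.pow_lt_pow_left hn.ne' ?_)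
  exact (ENNReal.ofReal_lt_ofReal_iff (zpow_pos two_pos _)).2
    (zpow_lt_zpow_right₀ one_lt_two (neg_lt_neg hlt))

theorem measure_dyadicCube_le_measureGrowthNorm_mul (hn : 0 < n) (μ : Measure (Fin n → ℝ))
    (β : ℝ) (k : ℤ) (mv : Fin n → ℤ) :
    μ (dyadicCube k mv) ≤ measureGrowthNorm μ β * volume (dyadicCube k mv) ^ (β / n) := by
  have hr : 0 < (2 : ℝ) ^ (-k) := zpow_pos two_pos _
  have hside : volume (dyadicCube k mv) ^ (β / n) = ENNReal.ofReal (2 ^ (-k)) ^ β := by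
    rw [volume_dyadicCube, ← ENNReal.rpow_natCast, ← ENNReal.rpow_mul,
      mul_div_cancel₀ _ (Nat.cast_ne_zero.2 hn.ne')]
  have hk : ¬(2 : ℝ) ^ k ≤ 0 := (zpow_pos two_pos k).not_ge
  rw [hside, ← ENNReal.div_le_iff (by simp [hk]) (by simp [hk])]
  exact le_iSup₂_of_le (fun i => mv i * 2 ^ (-k)) (2 ^ (-k)) (le_iSup_of_le hr le_rfl)

theorem rpow_mul_measure_le_measureGrowthNorm_mul_prod (hn : 0 < n) (μ : Measure (Fin n → ℝ))
    {ι : Type*} (s : Finset ι) {P : ι → ℝ} (hP : ∀ j ∈ s, 0 < P j) {p α : ℝ} (hp : 0 ≤ p)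
    (hsum : ∑ j ∈ s, p / P j = 1) {k : ℤ} {mv : Fin n → ℤ} {A : Set (Fin n → ℝ)}
    (hA : A ⊆ dyadicCube k mv) (a : ι → ℝ≥0∞) :
    (volume (dyadicCube k mv) ^ (α / n) * ∏ j ∈ s, a j) ^ p * μ A ≤
      measureGrowthNorm μ (n - α * p) *
        ∏ j ∈ s, (volume (dyadicCube k mv) * a j ^ P j) ^ (p / P j) := by
  calc _ ≤ (volume (dyadicCube k mv) ^ (α / n) * ∏ j ∈ s, a j) ^ p *
        (measureGrowthNorm μ (n - α * p) * volume (dyadicCube k mv) ^ ((n - α * p) / n)) := by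
        gcongr
        exact (measure_mono hA).trans (measure_dyadicCube_le_measureGrowthNorm_mul hn μ _ _ _)
    _ = _ := by
        rw [show ((n : ℝ) - α * p) / n = 1 - α / n * p by field_simp, mul_left_comm,
          rpow_mul_prod_mul_rpow_eq_prod s (volume_dyadicCube_ne_zero _ _)
            (volume_dyadicCube_ne_top _ _) _ hp hP hsum]

end DyadicGeometry

section DyadicMaximal

variable {k0 : ℤ} {m0 : Fin n → ℤ}

def dyadicAverage (g : (Fin n → ℝ) → ℝ≥0∞) (k : ℤ) (mv : Fin n → ℤ) : ℝ≥0∞ :=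
  (volume (dyadicCube k mv))⁻¹ * ∫⁻ y in dyadicCube k mv, g y

theorem dyadicAverage_mul_volume (g : (Fin n → ℝ) → ℝ≥0∞) (k : ℤ) (mv : Fin n → ℤ) :
    dyadicAverage g k mv * volume (dyadicCube k mv) = ∫⁻ y in dyadicCube k mv, g y := by
  rw [dyadicAverage, mul_comm, ← mul_assoc, ENNReal.mul_inv_cancel (volume_dyadicCube_ne_zero k mv)
    (volume_dyadicCube_ne_top k mv), one_mul]

def localDyadicMaximal (k0 : ℤ) (m0 : Fin n → ℤ) (g : (Fin n → ℝ) → ℝ≥0∞)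
    (x : Fin n → ℝ) : ℝ≥0∞ :=
  ⨆ (Q : ℤ × (Fin n → ℤ)) (_ : dyadicCube Q.1 Q.2 ⊆ dyadicCube k0 m0),
    (dyadicCube Q.1 Q.2).indicator (fun _ => dyadicAverage g Q.1 Q.2) x

theorem measurable_localDyadicMaximal (g : (Fin n → ℝ) → ℝ≥0∞) :
    Measurable (localDyadicMaximal k0 m0 g) :=
  .iSup fun _ => .iSup fun _ => measurable_const.indicator (measurableSet_dyadicCube _ _)

theorem dyadicAverage_le_localDyadicMaximal {g : (Fin n → ℝ) → ℝ≥0∞} {k : ℤ} {mv : Fin n → ℤ}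
    {x : Fin n → ℝ} (hQ : dyadicCube k mv ⊆ dyadicCube k0 m0) (hx : x ∈ dyadicCube k mv) :
    dyadicAverage g k mv ≤ localDyadicMaximal k0 m0 g x := by
  refine le_iSup₂_of_le (k, mv) hQ ?_
  rw [Set.indicator_of_mem hx]

theorem lt_localDyadicMaximal_iff {g : (Fin n → ℝ) → ℝ≥0∞} {c : ℝ≥0∞} {x : Fin n → ℝ} :
    c < localDyadicMaximal k0 m0 g x ↔ ∃ Q : ℤ × (Fin n → ℤ),
      dyadicCube Q.1 Q.2 ⊆ dyadicCube k0 m0 ∧ x ∈ dyadicCube Q.1 Q.2 ∧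
        c < dyadicAverage g Q.1 Q.2 := by
  simp only [localDyadicMaximal, lt_iSup_iff, exists_prop]
  refine exists_congr fun Q => ?_
  by_cases hx : x ∈ dyadicCube Q.1 Q.2 <;> simp [hx]

theorem localDyadicMaximal_congr {g h : (Fin n → ℝ) → ℝ≥0∞}
    (hgh : ∀ k mv, ∫⁻ y in dyadicCube k mv, g y = ∫⁻ y in dyadicCube k mv, h y) :
    localDyadicMaximal k0 m0 g = localDyadicMaximal k0 m0 h := by
  ext x
  simp only [localDyadicMaximal, dyadicAverage, hgh]

theorem exists_maximal_dyadicCube (hn : 0 < n) {A : Set (ℤ × (Fin n → ℤ))}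
    (hA : ∀ Q ∈ A, dyadicCube Q.1 Q.2 ⊆ dyadicCube k0 m0) {Q : ℤ × (Fin n → ℤ)} (hQ : Q ∈ A) :
    ∃ Q' ∈ A, dyadicCube Q.1 Q.2 ⊆ dyadicCube Q'.1 Q'.2 ∧
      ∀ Q'' ∈ A, dyadicCube Q'.1 Q'.2 ⊆ dyadicCube Q''.1 Q''.2 → Q'' = Q' := by
  obtain ⟨k, ⟨mv, hA', hsub⟩, hleast⟩ := Int.exists_least_of_bdd
    (P := fun k => ∃ mv, (k, mv) ∈ A ∧ dyadicCube Q.1 Q.2 ⊆ dyadicCube k mv)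
    ⟨k0, fun k ⟨_, hmv, _⟩ => le_of_dyadicCube_subset hn (hA _ hmv)⟩ ⟨Q.1, Q.2, hQ, le_rfl⟩
  refine ⟨(k, mv), hA', hsub, fun Q'' hQ'' hsub' => ?_⟩
  have hk : Q''.1 = k := le_antisymm (le_of_dyadicCube_subset hn hsub')
    (hleast _ ⟨Q''.2, hQ'', hsub.trans hsub'⟩)
  obtain ⟨x, hx⟩ := dyadicCube_nonempty k mv
  refine Prod.ext hk (eq_of_dyadicCube_inter_nonempty (k := k) ⟨x, ?_, hx⟩)
  rw [← hk]
  exact hsub' hx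

theorem pairwiseDisjoint_dyadicCube_of_maximal {A : Set (ℤ × (Fin n → ℤ))}
    (hmax : ∀ Q ∈ A, ∀ Q' ∈ A, dyadicCube Q.1 Q.2 ⊆ dyadicCube Q'.1 Q'.2 → Q' = Q) :
    A.PairwiseDisjoint fun Q => dyadicCube Q.1 Q.2 := by
  intro Q hQ Q' hQ' hne
  rw [Function.onFun, Set.disjoint_iff_inter_eq_empty, ← Set.not_nonempty_iff_eq_empty]
  intro hnon
  rcases le_total Q.1 Q'.1 with hle | hle
  · exact hne (hmax Q' hQ' Q hQ (dyadicCube_subset_of_le hle hnon))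
  · rw [Set.inter_comm] at hnon
    exact hne (hmax Q hQ Q' hQ' (dyadicCube_subset_of_le hle hnon)).symm

/-- Pass to the maximal cubes of `A`, which are pairwise disjoint. -/
theorem mul_volume_biUnion_le_setLIntegral (hn : 0 < n) {A : Set (ℤ × (Fin n → ℤ))}
    (hA : ∀ Q ∈ A, dyadicCube Q.1 Q.2 ⊆ dyadicCube k0 m0) (c : ℝ≥0∞) (g : (Fin n → ℝ) → ℝ≥0∞)
    (hcg : ∀ Q ∈ A, c * volume (dyadicCube Q.1 Q.2) ≤ ∫⁻ y in dyadicCube Q.1 Q.2, g y) :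
    c * volume (⋃ Q ∈ A, dyadicCube Q.1 Q.2) ≤ ∫⁻ y in dyadicCube k0 m0, g y := by
  set M := {Q ∈ A | ∀ Q' ∈ A, dyadicCube Q.1 Q.2 ⊆ dyadicCube Q'.1 Q'.2 → Q' = Q}
  have hcover : (⋃ Q ∈ A, dyadicCube Q.1 Q.2) ⊆ ⋃ Q ∈ M, dyadicCube Q.1 Q.2 := by
    refine Set.iUnion₂_subset fun Q hQ => ?_
    obtain ⟨Q', hQ'A, hsub, hmax⟩ := exists_maximal_dyadicCube hn hA hQ
    exact hsub.trans (Set.subset_biUnion_of_mem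
      (u := fun Q : ℤ × (Fin n → ℤ) => dyadicCube Q.1 Q.2) ⟨hQ'A, hmax⟩)
  have hdisj : M.PairwiseDisjoint fun Q => dyadicCube Q.1 Q.2 :=
    pairwiseDisjoint_dyadicCube_of_maximal fun Q hQ Q' hQ' => hQ.2 Q' hQ'.1
  have hmeas : ∀ Q ∈ M, MeasurableSet (dyadicCube Q.1 Q.2) :=
    fun _ _ => measurableSet_dyadicCube _ _
  calc c * volume (⋃ Q ∈ A, dyadicCube Q.1 Q.2)
      ≤ c * volume (⋃ Q ∈ M, dyadicCube Q.1 Q.2) := by gcongr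
    _ = ∑' Q : M, c * volume (dyadicCube Q.1.1 Q.1.2) := by
      rw [measure_biUnion M.to_countable hdisj hmeas, ENNReal.tsum_mul_left]
    _ ≤ ∑' Q : M, ∫⁻ y in dyadicCube Q.1.1 Q.1.2, g y :=
      ENNReal.tsum_le_tsum fun Q => hcg Q Q.2.1
    _ = ∫⁻ y in ⋃ Q ∈ M, dyadicCube Q.1 Q.2, g y :=
      (lintegral_biUnion M.to_countable hmeas hdisj g).symm
    _ ≤ ∫⁻ y in dyadicCube k0 m0, g y :=
      lintegral_mono_set (Set.iUnion₂_subset fun Q hQ => hA Q hQ.1)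

theorem mul_volume_lt_localDyadicMaximal_le (hn : 0 < n) (g : (Fin n → ℝ) → ℝ≥0∞) (c : ℝ≥0∞) :
    c * volume {x | c < localDyadicMaximal k0 m0 g x} ≤ ∫⁻ y in dyadicCube k0 m0, g y := by
  set A := {Q : ℤ × (Fin n → ℤ) |
    dyadicCube Q.1 Q.2 ⊆ dyadicCube k0 m0 ∧ c < dyadicAverage g Q.1 Q.2}
  have hset : {x | c < localDyadicMaximal k0 m0 g x} = ⋃ Q ∈ A, dyadicCube Q.1 Q.2 := by
    ext x
    simp only [Set.mem_ofPred_eq, lt_localDyadicMaximal_iff, Set.mem_iUnion, exists_prop, A]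
    exact exists_congr fun Q => by tauto
  rw [hset]
  refine mul_volume_biUnion_le_setLIntegral hn (fun Q hQ => hQ.1) c g fun Q hQ => ?_
  rw [← dyadicAverage_mul_volume]
  exact mul_le_mul_left hQ.2.le _

theorem dyadicAverage_le_add_dyadicAverage_indicator (g : (Fin n → ℝ) → ℝ≥0∞) (c : ℝ≥0∞)
    (k : ℤ) (mv : Fin n → ℤ) :
    dyadicAverage g k mv ≤ c + dyadicAverage ({y | c < g y}.indicator g) k mv := by
  have hg : ∀ y, g y ≤ c + {y | c < g y}.indicator g y := by
    intro y
    by_cases hy : c < g y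
    · simp [Set.indicator_of_mem (show y ∈ {y | c < g y} from hy)]
    · exact (not_lt.1 hy).trans le_self_add
  calc dyadicAverage g k mv
      ≤ (volume (dyadicCube k mv))⁻¹ *
          ∫⁻ y in dyadicCube k mv, c + {y | c < g y}.indicator g y :=
        mul_le_mul_right (lintegral_mono hg) _
    _ = c + dyadicAverage ({y | c < g y}.indicator g) k mv := by
      rw [lintegral_add_left measurable_const, setLIntegral_const, mul_add, dyadicAverage,
        mul_comm c, ← mul_assoc, ENNReal.inv_mul_cancel (volume_dyadicCube_ne_zero k mv)
          (volume_dyadicCube_ne_top k mv), one_mul]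

theorem mul_volume_two_mul_lt_localDyadicMaximal_le (hn : 0 < n) (g : (Fin n → ℝ) → ℝ≥0∞)
    {c : ℝ≥0∞} (hc : c ≠ ∞) :
    c * volume {x | 2 * c < localDyadicMaximal k0 m0 g x} ≤
      ∫⁻ y in dyadicCube k0 m0, {y | c < g y}.indicator g y := by
  refine le_trans ?_ (mul_volume_lt_localDyadicMaximal_le hn _ c)
  refine mul_le_mul_right (measure_mono (μ := volume) fun x hx => ?_) c
  obtain ⟨Q, hQ, hxQ, hlt⟩ := lt_localDyadicMaximal_iff.1 hx
  refine lt_localDyadicMaximal_iff.2 ⟨Q, hQ, hxQ, ?_⟩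
  rw [two_mul] at hlt
  exact (ENNReal.add_lt_add_iff_left hc).1
    (hlt.trans_le (dyadicAverage_le_add_dyadicAverage_indicator g c Q.1 Q.2))

theorem setLIntegral_localDyadicMaximal_rpow_le_of_measurable (hn : 0 < n) {q : ℝ} (hq : 1 < q)
    {g : (Fin n → ℝ) → ℝ≥0∞} (hg : Measurable g) :
    ∫⁻ x in dyadicCube k0 m0, localDyadicMaximal k0 m0 g x ^ q ≤
      dyadicMaximalConst q * ∫⁻ x in dyadicCube k0 m0, g x ^ q := by
  set M := localDyadicMaximal k0 m0 g
  have hweak : ∀ k : ℤ, volume {x | (2 : ℝ≥0∞) ^ (k + 1) < M x} ≤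
      ((2 : ℝ≥0∞) ^ k)⁻¹ * ∫⁻ y in dyadicCube k0 m0, {y | 2 ^ k < g y}.indicator g y := by
    intro k
    rw [← ENNReal.mul_le_iff_le_inv (ENNReal.zpow_pos two_ne_zero ENNReal.ofNat_ne_top k).ne'
      (ENNReal.zpow_lt_top two_ne_zero ENNReal.ofNat_ne_top k).ne,
      ENNReal.zpow_add two_ne_zero ENNReal.ofNat_ne_top, zpow_one, mul_comm _ (2 : ℝ≥0∞)]
    exact mul_volume_two_mul_lt_localDyadicMaximal_le hn g
      (ENNReal.zpow_lt_top two_ne_zero ENNReal.ofNat_ne_top k).ne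
  have hind : ∀ (k : ℤ) (y : Fin n → ℝ), (2 : ℝ≥0∞) ^ ((k + 2 : ℝ) * q) * ((2 : ℝ≥0∞) ^ k)⁻¹ *
      {y | 2 ^ k < g y}.indicator g y = if (2 : ℝ≥0∞) ^ k < g y then
        (2 : ℝ≥0∞) ^ ((k + 2 : ℝ) * q) * ((2 : ℝ≥0∞) ^ k)⁻¹ * g y else 0 := by
    intro k y
    by_cases hy : (2 : ℝ≥0∞) ^ k < g y <;> simp [hy]
  calc ∫⁻ x in dyadicCube k0 m0, M x ^ q
      ≤ ∑' k : ℤ, (2 : ℝ≥0∞) ^ ((k + 2 : ℝ) * q) *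
          (volume.restrict (dyadicCube k0 m0)) {x | (2 : ℝ≥0∞) ^ (k + 1) < M x} :=
        lintegral_rpow_le_tsum_measure _ (measurable_localDyadicMaximal g) (by linarith)
    _ ≤ ∑' k : ℤ, (2 : ℝ≥0∞) ^ ((k + 2 : ℝ) * q) * (((2 : ℝ≥0∞) ^ k)⁻¹ *
          ∫⁻ y in dyadicCube k0 m0, {y | 2 ^ k < g y}.indicator g y) :=
        ENNReal.tsum_le_tsum fun k => by
          gcongr
          exact (Measure.restrict_apply_le _ _).trans (hweak k)
    _ = ∫⁻ y in dyadicCube k0 m0, ∑' k : ℤ, (if (2 : ℝ≥0∞) ^ k < g y then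
          (2 : ℝ≥0∞) ^ ((k + 2 : ℝ) * q) * ((2 : ℝ≥0∞) ^ k)⁻¹ * g y else 0) := by
        have hmeas : ∀ k : ℤ, Measurable ({y | (2 : ℝ≥0∞) ^ k < g y}.indicator g) :=
          fun k => hg.indicator (measurableSet_lt measurable_const hg)
        simp_rw [← hind]
        rw [lintegral_tsum fun k => ((hmeas k).const_mul _).aemeasurable]
        simp_rw [lintegral_const_mul _ (hmeas _), mul_assoc]
    _ ≤ ∫⁻ y in dyadicCube k0 m0, dyadicMaximalConst q * g y ^ q :=
        lintegral_mono fun y => tsum_ite_two_zpow_lt_mul_le hq (g y)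
    _ = dyadicMaximalConst q * ∫⁻ y in dyadicCube k0 m0, g y ^ q :=
        lintegral_const_mul' _ _ (dyadicMaximalConst_lt_top hq).ne

theorem exists_measurable_le_setLIntegral_dyadicCube_eq (g : (Fin n → ℝ) → ℝ≥0∞) :
    ∃ h : (Fin n → ℝ) → ℝ≥0∞, Measurable h ∧ h ≤ g ∧
      ∀ k mv, ∫⁻ y in dyadicCube k mv, h y = ∫⁻ y in dyadicCube k mv, g y := by
  choose φ hφ hφg hφeq using fun Q : ℤ × (Fin n → ℤ) =>
    exists_measurable_le_lintegral_eq (volume.restrict (dyadicCube Q.1 Q.2)) g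
  refine ⟨fun x => ⨆ Q, φ Q x, .iSup hφ, fun x => iSup_le fun Q => hφg Q x, fun k mv => ?_⟩
  refine le_antisymm (lintegral_mono fun x => iSup_le fun Q => hφg Q x) ?_
  rw [hφeq (k, mv)]
  exact lintegral_mono fun x => le_iSup (fun Q => φ Q x) (k, mv)

theorem setLIntegral_localDyadicMaximal_rpow_le (hn : 0 < n) {q : ℝ} (hq : 1 < q)
    (g : (Fin n → ℝ) → ℝ≥0∞) :
    ∫⁻ x in dyadicCube k0 m0, localDyadicMaximal k0 m0 g x ^ q ≤
      dyadicMaximalConst q * ∫⁻ x in dyadicCube k0 m0, g x ^ q := by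
  obtain ⟨h, hh, hhg, hint⟩ := exists_measurable_le_setLIntegral_dyadicCube_eq g
  rw [← localDyadicMaximal_congr hint]
  refine (setLIntegral_localDyadicMaximal_rpow_le_of_measurable hn hq hh).trans ?_
  gcongr with x
  exact hhg x

/-- `E i` is the set `E_𝒮(S)` attached to the cube `S = Q i` of the `η`-sparse family. -/
structure IsSparseFamily {ι : Type*} (η : ℝ) (Q : ι → ℤ × (Fin n → ℤ))
    (E : ι → Set (Fin n → ℝ)) : Prop where
  measurableSet : ∀ i, MeasurableSet (E i)
  subset_dyadicCube : ∀ i, E i ⊆ dyadicCube (Q i).1 (Q i).2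
  ofReal_mul_volume_le : ∀ i, ENNReal.ofReal η * volume (dyadicCube (Q i).1 (Q i).2) ≤ volume (E i)
  pairwise_disjoint : Pairwise (Function.onFun Disjoint E)

theorem IsSparseFamily.tsum_volume_mul_dyadicAverage_rpow_le {ι : Type*} [Countable ι]
    {η : ℝ} {Q : ι → ℤ × (Fin n → ℤ)} {E : ι → Set (Fin n → ℝ)} (hS : IsSparseFamily η Q E)
    (hη : 0 < η) (hQ : ∀ i, dyadicCube (Q i).1 (Q i).2 ⊆ dyadicCube k0 m0) (hn : 0 < n)
    {q : ℝ} (hq : 1 < q) (g : (Fin n → ℝ) → ℝ≥0∞) :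
    ∑' i, volume (dyadicCube (Q i).1 (Q i).2) * dyadicAverage g (Q i).1 (Q i).2 ^ q ≤
      (ENNReal.ofReal η)⁻¹ * (dyadicMaximalConst q * ∫⁻ y in dyadicCube k0 m0, g y ^ q) := by
  set M := localDyadicMaximal k0 m0 g
  have hvol : ∀ i, volume (dyadicCube (Q i).1 (Q i).2) ≤ (ENNReal.ofReal η)⁻¹ * volume (E i) :=
    fun i => (ENNReal.mul_le_iff_le_inv (ENNReal.ofReal_pos.2 hη).ne' ENNReal.ofReal_ne_top).1
      (hS.ofReal_mul_volume_le i)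
  have hE : ∀ i, volume (E i) * dyadicAverage g (Q i).1 (Q i).2 ^ q ≤ ∫⁻ x in E i, M x ^ q := by
    intro i
    rw [mul_comm, ← setLIntegral_const]
    refine setLIntegral_mono' (hS.measurableSet i) fun x hx => ?_
    exact ENNReal.rpow_le_rpow
      (dyadicAverage_le_localDyadicMaximal (hQ i) (hS.subset_dyadicCube i hx)) (by linarith)
  calc ∑' i, volume (dyadicCube (Q i).1 (Q i).2) * dyadicAverage g (Q i).1 (Q i).2 ^ q
      ≤ ∑' i, (ENNReal.ofReal η)⁻¹ * (volume (E i) * dyadicAverage g (Q i).1 (Q i).2 ^ q) :=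
        ENNReal.tsum_le_tsum fun i => by rw [← mul_assoc]; gcongr; exact hvol i
    _ ≤ ∑' i, (ENNReal.ofReal η)⁻¹ * ∫⁻ x in E i, M x ^ q := by gcongr with i; exact hE i
    _ = (ENNReal.ofReal η)⁻¹ * ∫⁻ x in ⋃ i, E i, M x ^ q := by
        rw [ENNReal.tsum_mul_left, lintegral_iUnion hS.measurableSet hS.pairwise_disjoint]
    _ ≤ (ENNReal.ofReal η)⁻¹ * ∫⁻ x in dyadicCube k0 m0, M x ^ q := by
        gcongr
        exact Set.iUnion_subset fun i => (hS.subset_dyadicCube i).trans (hQ i)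
    _ ≤ _ := by
        gcongr
        exact setLIntegral_localDyadicMaximal_rpow_le hn hq g

theorem IsSparseFamily.setLIntegral_rpow_tsum_indicator_le {ι : Type*} [Countable ι] {η : ℝ}
    {Q : ι → ℤ × (Fin n → ℤ)} {E : ι → Set (Fin n → ℝ)} (hS : IsSparseFamily η Q E) (hη : 0 < η)
    (hQ : ∀ i, dyadicCube (Q i).1 (Q i).2 ⊆ dyadicCube k0 m0) (hn : 0 < n)
    (μ : Measure (Fin n → ℝ)) {κ : Type*} [Fintype κ] {P : κ → ℝ} (hP : ∀ j, 1 < P j) {p α : ℝ}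
    (hp : 0 < p) (hsum : ∑ j, p / P j = 1) (g : κ → (Fin n → ℝ) → ℝ≥0∞) :
    ∫⁻ x in dyadicCube k0 m0, (∑' i, (E i).indicator (fun _ =>
        volume (dyadicCube (Q i).1 (Q i).2) ^ (α / n) *
          ∏ j, dyadicAverage (g j) (Q i).1 (Q i).2) x) ^ p ∂μ ≤
      (∏ j, dyadicMaximalConst (P j) ^ (p / P j)) * (ENNReal.ofReal η)⁻¹ *
        measureGrowthNorm μ (n - α * p) *
          ∏ j, (∫⁻ y in dyadicCube k0 m0, g j y ^ P j) ^ (p / P j) := by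
  have hP0 : ∀ j ∈ Finset.univ, 0 < P j := fun j _ => one_pos.trans (hP j)
  have ht0 : ∀ j ∈ Finset.univ, 0 ≤ p / P j := fun j hj => div_nonneg hp.le (hP0 j hj).le
  calc _ ≤ ∑' i, (volume (dyadicCube (Q i).1 (Q i).2) ^ (α / n) *
          ∏ j, dyadicAverage (g j) (Q i).1 (Q i).2) ^ p * μ (E i) :=
        _root_.setLIntegral_rpow_tsum_indicator_le μ _ hS.measurableSet hS.pairwise_disjoint _ hp
    _ ≤ ∑' i, measureGrowthNorm μ (n - α * p) * ∏ j, (volume (dyadicCube (Q i).1 (Q i).2) *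
          dyadicAverage (g j) (Q i).1 (Q i).2 ^ P j) ^ (p / P j) :=
        ENNReal.tsum_le_tsum fun i => rpow_mul_measure_le_measureGrowthNorm_mul_prod hn μ _ hP0
          hp.le hsum (hS.subset_dyadicCube i) _
    _ ≤ measureGrowthNorm μ (n - α * p) * ∏ j, (∑' i, volume (dyadicCube (Q i).1 (Q i).2) *
          dyadicAverage (g j) (Q i).1 (Q i).2 ^ P j) ^ (p / P j) := by
        rw [ENNReal.tsum_mul_left]
        gcongr
        exact tsum_prod_rpow_le_prod_tsum_rpow _ _ hsum ht0
    _ ≤ measureGrowthNorm μ (n - α * p) * ∏ j, ((ENNReal.ofReal η)⁻¹ *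
          (dyadicMaximalConst (P j) * ∫⁻ y in dyadicCube k0 m0, g j y ^ P j)) ^ (p / P j) := by
        gcongr with j hj
        · exact ht0 j hj
        · exact hS.tsum_volume_mul_dyadicAverage_rpow_le hη hQ hn (hP j) (g j)
    _ = _ := by
        rw [prod_mul_rpow_eq_mul_prod_rpow _ (ENNReal.inv_ne_zero.2 ENNReal.ofReal_ne_top)
          (ENNReal.inv_ne_top.2 (ENNReal.ofReal_pos.2 hη).ne') _ ht0 hsum,
          Finset.prod_congr rfl fun j hj => ENNReal.mul_rpow_of_nonneg _ _ (ht0 j hj),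
          Finset.prod_mul_distrib]
        ring

end DyadicMaximal

theorem statement12_general (hn : 0 < n) (m : ℕ)
    (P : Fin m → ℝ) (hP : ∀ j, 1 < P j) (p α : ℝ)
    (hp : 1 / p = ∑ j, 1 / P j) (hppos : 0 < p) :
    ∃ C : ℝ≥0∞, 0 < C ∧ C < ∞ ∧
      ∀ μ : Measure (Fin n → ℝ), IsLocallyFiniteMeasure μ →
        measureGrowthNorm μ (n - α * p) < ∞ →
        ∀ η : ℝ, 0 < η → η < 1 →
        ∀ (𝒮 : Set (ℤ × (Fin n → ℤ))) (E : ℤ × (Fin n → ℤ) → Set (Fin n → ℝ)),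
          (∀ S ∈ 𝒮, MeasurableSet (E S) ∧ E S ⊆ dyadicCube S.1 S.2 ∧
            ENNReal.ofReal η * volume (dyadicCube S.1 S.2) ≤ volume (E S)) →
          𝒮.PairwiseDisjoint E →
          ∀ (k0 : ℤ) (m0 : Fin n → ℤ) (f : Fin m → (Fin n → ℝ) → ℝ),
            (∫⁻ x in dyadicCube k0 m0,
              (∑' S : {S : ℤ × (Fin n → ℤ) //
                  S ∈ 𝒮 ∧ dyadicCube S.1 S.2 ⊆ dyadicCube k0 m0},
                (E S.1).indicator
                  (fun _ => volume (dyadicCube S.1.1 S.1.2) ^ (α / (n : ℝ)) *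
                    ∏ j, (volume (dyadicCube S.1.1 S.1.2))⁻¹ *
                      ∫⁻ y in dyadicCube S.1.1 S.1.2, ENNReal.ofReal |f j y|) x) ^ p
              ∂μ) ≤
            C * (ENNReal.ofReal η)⁻¹ * measureGrowthNorm μ (n - α * p) *
              ∏ j, (∫⁻ y in dyadicCube k0 m0, ENNReal.ofReal |f j y| ^ P j) ^ (p / P j) := by
  have hsum : ∑ j, p / P j = 1 := by
    simp_rw [div_eq_mul_one_div p]
    rw [← Finset.mul_sum, ← hp, mul_one_div_cancel hppos.ne']
  have hC : ∀ j, 0 < dyadicMaximalConst (P j) ^ (p / P j) ∧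
      dyadicMaximalConst (P j) ^ (p / P j) < ∞ := fun j =>
    ⟨ENNReal.rpow_pos (pos_iff_ne_zero.2 (dyadicMaximalConst_ne_zero _))
      (dyadicMaximalConst_lt_top (hP j)).ne,
      ENNReal.rpow_lt_top_of_nonneg (div_nonneg hppos.le (one_pos.trans (hP j)).le)
        (dyadicMaximalConst_lt_top (hP j)).ne⟩
  refine ⟨∏ j, dyadicMaximalConst (P j) ^ (p / P j),
    pos_iff_ne_zero.2 (Finset.prod_ne_zero_iff.2 fun j _ => (hC j).1.ne'),
    ENNReal.prod_lt_top fun j _ => (hC j).2, ?_⟩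
  intro μ _ _ η hη _ 𝒮 E hE hdisj k0 m0 f
  have hS : IsSparseFamily η (fun S : {S // S ∈ 𝒮 ∧ dyadicCube S.1 S.2 ⊆ dyadicCube k0 m0} => S.1)
      (fun S => E S.1) :=
    ⟨fun S => (hE S.1 S.2.1).1, fun S => (hE S.1 S.2.1).2.1, fun S => (hE S.1 S.2.1).2.2,
      fun S T hST => hdisj S.2.1 T.2.1 (Subtype.coe_injective.ne hST)⟩
  exact hS.setLIntegral_rpow_tsum_indicator_le hη (fun S => S.2.2) hn μ hP hppos hsum
    fun j y => ENNReal.ofReal |f j y|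

theorem statement12 (hn : 0 < n) (m : ℕ) (hm : 0 < m)
    (P : Fin m → ℝ) (hP : ∀ j, 1 < P j) (p α : ℝ)
    (hp : 1 / p = ∑ j, 1 / P j) (hppos : 0 < p)
    (hα : 0 < α) (hαmn : α < (m : ℝ) * n) :
    ∃ C : ℝ≥0∞, 0 < C ∧ C < ∞ ∧
      ∀ μ : Measure (Fin n → ℝ), IsLocallyFiniteMeasure μ →
        measureGrowthNorm μ (n - α * p) < ∞ →
        ∀ η : ℝ, 0 < η → η < 1 →
        ∀ (𝒮 : Set (ℤ × (Fin n → ℤ))) (E : ℤ × (Fin n → ℤ) → Set (Fin n → ℝ)),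
          (∀ S ∈ 𝒮, MeasurableSet (E S) ∧ E S ⊆ dyadicCube S.1 S.2 ∧
            ENNReal.ofReal η * volume (dyadicCube S.1 S.2) ≤ volume (E S)) →
          𝒮.PairwiseDisjoint E →
          ∀ (k0 : ℤ) (m0 : Fin n → ℤ) (f : Fin m → (Fin n → ℝ) → ℝ),
            (∫⁻ x in dyadicCube k0 m0,
              (∑' S : {S : ℤ × (Fin n → ℤ) //
                  S ∈ 𝒮 ∧ dyadicCube S.1 S.2 ⊆ dyadicCube k0 m0},
                (E S.1).indicator
                  (fun _ => volume (dyadicCube S.1.1 S.1.2) ^ (α / (n : ℝ)) *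
                    ∏ j, (volume (dyadicCube S.1.1 S.1.2))⁻¹ *
                      ∫⁻ y in dyadicCube S.1.1 S.1.2, ENNReal.ofReal |f j y|) x) ^ p
              ∂μ) ≤
            C * (ENNReal.ofReal η)⁻¹ * measureGrowthNorm μ (n - α * p) *
              ∏ j, (∫⁻ y in dyadicCube k0 m0, ENNReal.ofReal |f j y| ^ P j) ^ (p / P j) :=
  statement12_general hn m P hP p α hp hppos
end
end
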